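/- arXiv:1404.4445 — 5 statements merged into one kernel-verified Lean document; each statement's English description precedes it below -/
import Mathlib

section
/- Let r ∈ (2,∞) and let S : M^d_sym → M^d_sym satisfy the assumptions (h1) and (h2). Then there exists a constant c3 > 0 (depending only on c0 and r) such that for all B, D ∈ M^d_sym one has the strict monotonicity estimate (S(B) − S(D)) : (B − D) ≥ c3 |B − D|² (1 + |B| + |D|)^{r−2}. -/
open MeasureTheory Real

noncomputable section

/-- Partial derivative in direction `i` of a scalar function on `ℝ^d`. -/
def pd {d : ℕ} (f : (Fin d → ℝ) → ℝ) (i : Fin d) (x : Fin d → ℝ) : ℝ :=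
  fderiv ℝ f x (Pi.single i 1)

/-- The periodic box `Ω = (0, 2π)^d`. -/
def box (d : ℕ) : Set (Fin d → ℝ) := Set.univ.pi fun _ => Set.Ioo 0 (2 * π)

/-- `2π`-periodicity in every coordinate direction. -/
def IsPer {d : ℕ} {E : Type*} (g : (Fin d → ℝ) → E) : Prop :=
  ∀ (x : Fin d → ℝ) (i : Fin d), g (x + Pi.single i (2 * π)) = g x

/-- Frobenius norm of a `d × d` matrix. -/
def frob {d : ℕ} (M : Fin d → Fin d → ℝ) : ℝ := Real.sqrt (∑ i, ∑ j, M i j ^ 2)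

/-- Inner (double-dot) product of `d × d` matrices: `A : B = ∑ᵢⱼ Aᵢⱼ Bᵢⱼ`. -/
def minner {d : ℕ} (A B : Fin d → Fin d → ℝ) : ℝ := ∑ i, ∑ j, A i j * B i j

/-- Symmetry of a `d × d` matrix. -/
def Symm {d : ℕ} (A : Fin d → Fin d → ℝ) : Prop := ∀ i j, A i j = A j i

/-- The gradient matrix `(∇u)ᵢⱼ = ∂ⱼuᵢ` of a vector field. -/
def gradM {d : ℕ} (u : (Fin d → ℝ) → (Fin d → ℝ)) (x : Fin d → ℝ) : Fin d → Fin d → ℝ :=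
  fun i j => pd (fun y => u y i) j x

/-- The symmetric part `Du = ½(∇u + (∇u)ᵀ)` of the gradient. -/
def symG {d : ℕ} (u : (Fin d → ℝ) → (Fin d → ℝ)) (x : Fin d → ℝ) : Fin d → Fin d → ℝ :=
  fun i j => (gradM u x i j + gradM u x j i) / 2

/-- Componentwise Laplacian `Δuᵢ = ∑ₖ ∂ₖ∂ₖ uᵢ`. -/
def lap {d : ℕ} (u : (Fin d → ℝ) → (Fin d → ℝ)) (i : Fin d) (x : Fin d → ℝ) : ℝ :=
  ∑ k, pd (pd (fun y => u y i) k) k x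

/-- Divergence-free condition `div u = ∑ᵢ ∂ᵢuᵢ = 0` everywhere. -/
def DivFree {d : ℕ} (u : (Fin d → ℝ) → (Fin d → ℝ)) : Prop :=
  ∀ x, ∑ i, pd (fun y => u y i) i x = 0

/-!
Along the segment `t ↦ D + t • (B - D)` the function `φ t = S (D + t • (B - D)) : (B - D)` has
derivative `S'(D + t • (B - D))[B - D] : (B - D)`, which by (h1) is nonnegative everywhere and at
least `c0 (1 + |D + t • (B - D)|)^(r-2) |B - D|²`. If `|D| ≤ |B|`, then for `t ∈ [3/4, 1]` the
point `D + t • (B - D)` has norm at least `|B| / 2`, so `1 + |D + t • (B - D)|` is at least a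
quarter of `1 + |B| + |D|`. Integrating the derivative over `[3/4, 1]` gives the estimate with
`c3 = c0 / 4^(r-1)`; the case `|B| ≤ |D|` follows by exchanging `B` and `D`.
-/

variable {d : ℕ}

theorem Symm.sub {A B : Fin d → Fin d → ℝ} (hA : Symm A) (hB : Symm B) : Symm (A - B) :=
  fun i j => by simp only [Pi.sub_apply, hA i j, hB i j]

theorem Symm.add_smul {A B : Fin d → Fin d → ℝ} (hA : Symm A) (hB : Symm B) (t : ℝ) :
    Symm (A + t • B) :=
  fun i j => by simp only [Pi.add_apply, Pi.smul_apply, smul_eq_mul, hA i j, hB i j]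

theorem minner_sub_left (X Y A : Fin d → Fin d → ℝ) :
    minner (X - Y) A = minner X A - minner Y A := by
  simp only [minner, Pi.sub_apply, sub_mul, Finset.sum_sub_distrib]

theorem minner_sub_sub_comm (X Y A B : Fin d → Fin d → ℝ) :
    minner (Y - X) (B - A) = minner (X - Y) (A - B) :=
  Finset.sum_congr rfl fun _ _ => Finset.sum_congr rfl fun _ _ => by simp only [Pi.sub_apply]; ring

theorem frob_nonneg (M : Fin d → Fin d → ℝ) : 0 ≤ frob M := Real.sqrt_nonneg _

theorem frob_sub_comm (A B : Fin d → Fin d → ℝ) : frob (B - A) = frob (A - B) := by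
  simp only [frob, Pi.sub_apply, ← neg_sub (A _ _), neg_sq]

def entryVec (M : Fin d → Fin d → ℝ) : EuclideanSpace ℝ (Fin d × Fin d) :=
  WithLp.toLp 2 fun p => M p.1 p.2

theorem frob_eq_norm_entryVec (M : Fin d → Fin d → ℝ) : frob M = ‖entryVec M‖ := by
  rw [EuclideanSpace.norm_eq, frob, Fintype.sum_prod_type]
  simp only [entryVec, Real.norm_eq_abs, sq_abs]

theorem mul_frob_sub_mul_frob_le_frob_add_smul_sub (A B : Fin d → Fin d → ℝ) {t : ℝ}
    (ht₀ : 0 ≤ t) (ht₁ : t ≤ 1) :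
    t * frob B - (1 - t) * frob A ≤ frob (A + t • (B - A)) := by
  have hcomb : entryVec (A + t • (B - A)) = t • entryVec B - -((1 - t) • entryVec A) := by
    ext p
    simp only [entryVec, PiLp.sub_apply, PiLp.neg_apply, PiLp.smul_apply, Pi.add_apply,
      Pi.smul_apply, Pi.sub_apply, smul_eq_mul]
    ring
  rw [frob_eq_norm_entryVec, frob_eq_norm_entryVec, frob_eq_norm_entryVec, hcomb]
  simpa only [norm_smul, norm_neg, Real.norm_eq_abs, abs_of_nonneg ht₀,
    abs_of_nonneg (sub_nonneg.2 ht₁)] using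
    norm_sub_norm_le (t • entryVec B) (-((1 - t) • entryVec A))

theorem one_add_frob_add_frob_le_four_mul (A B : Fin d → Fin d → ℝ) (hAB : frob A ≤ frob B)
    {t : ℝ} (ht : t ∈ Set.Icc (3 / 4 : ℝ) 1) :
    1 + frob B + frob A ≤ 4 * (1 + frob (A + t • (B - A))) := by
  have := mul_frob_sub_mul_frob_le_frob_add_smul_sub A B (by linarith [ht.1]) ht.2
  nlinarith [frob_nonneg A, ht.1]

theorem mul_sub_le_sub_of_deriv_nonneg_of_le_deriv {f : ℝ → ℝ} (hf : Differentiable ℝ f)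
    {a b c K : ℝ} (hab : a ≤ b) (hbc : b ≤ c) (hf'_nonneg : ∀ x, 0 ≤ deriv f x)
    (hf'_ge : ∀ x ∈ Set.Ioo b c, K ≤ deriv f x) : K * (c - b) ≤ f c - f a := by
  have hmono : f a ≤ f b := monotone_of_deriv_nonneg hf hf'_nonneg hab
  have hslope := (convex_Icc b c).mul_sub_le_image_sub_of_le_deriv hf.continuous.continuousOn
    hf.differentiableOn (by rwa [interior_Icc]) b ⟨le_rfl, hbc⟩ c ⟨hbc, le_rfl⟩ hbc
  linarith

theorem hasDerivAt_minner_apply_add_smul {S : (Fin d → Fin d → ℝ) → (Fin d → Fin d → ℝ)}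
    (hS : Differentiable ℝ S) (A B : Fin d → Fin d → ℝ) (t : ℝ) :
    HasDerivAt (fun s : ℝ => minner (S (A + s • B)) B) (minner (fderiv ℝ S (A + t • B) B) B) t := by
  have hline : HasDerivAt (fun s : ℝ => A + s • B) B t := by
    simpa using ((hasDerivAt_id t).smul_const B).const_add A
  have hcomp : HasDerivAt (fun s => S (A + s • B)) (fderiv ℝ S (A + t • B) B) t :=
    (hS _).hasFDerivAt.comp_hasDerivAt t hline
  unfold minner
  refine HasDerivAt.fun_sum fun i _ => HasDerivAt.fun_sum fun j _ => ?_
  exact (hasDerivAt_pi.1 (hasDerivAt_pi.1 hcomp i) j).mul_const _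

theorem minner_sub_ge_of_frob_le {r c0 : ℝ} (hr : 2 < r) (hc0 : 0 < c0)
    {S : (Fin d → Fin d → ℝ) → (Fin d → Fin d → ℝ)} (hS : Differentiable ℝ S)
    (h1 : ∀ B D, Symm B → Symm D →
      c0 * (1 + frob D) ^ (r - 2) * frob B ^ 2 ≤ minner (fderiv ℝ S D B) B)
    {B D : Fin d → Fin d → ℝ} (hB : Symm B) (hD : Symm D) (hDB : frob D ≤ frob B) :
    minner (S B - S D) (B - D) ≥
      c0 / 4 ^ (r - 1) * frob (B - D) ^ 2 * (1 + frob B + frob D) ^ (r - 2) := by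
  set A := B - D
  set φ : ℝ → ℝ := fun s => minner (S (D + s • A)) A
  set s := 1 + frob B + frob D
  have hs : 0 < s := by positivity [frob_nonneg B, frob_nonneg D]
  have hderiv t : deriv φ t = minner (fderiv ℝ S (D + t • A) A) A :=
    (hasDerivAt_minner_apply_add_smul hS D A t).deriv
  have hφ_lower t : c0 * (1 + frob (D + t • A)) ^ (r - 2) * frob A ^ 2 ≤ deriv φ t :=
    hderiv t ▸ h1 A _ (hB.sub hD) (hD.add_smul (hB.sub hD) t)
  have hφ'_nonneg t : 0 ≤ deriv φ t :=
    le_trans (by positivity [frob_nonneg (D + t • A)]) (hφ_lower t)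
  have hφ'_ge : ∀ t ∈ Set.Ioo (3 / 4 : ℝ) 1, c0 * (s / 4) ^ (r - 2) * frob A ^ 2 ≤ deriv φ t := by
    refine fun t ht => le_trans ?_ (hφ_lower t)
    have hquarter : s / 4 ≤ 1 + frob (D + t • A) := by
      linarith [one_add_frob_add_frob_le_four_mul D B hDB (Set.Ioo_subset_Icc_self ht)]
    gcongr
  have hφ := mul_sub_le_sub_of_deriv_nonneg_of_le_deriv
    (fun t => (hasDerivAt_minner_apply_add_smul hS D A t).differentiableAt)
    (by norm_num : (0 : ℝ) ≤ 3 / 4) (by norm_num) hφ'_nonneg hφ'_ge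
  have hφ₁ : φ 1 = minner (S B) A := by simp only [φ, one_smul, A, add_sub_cancel]
  have hφ₀ : φ 0 = minner (S D) A := by simp only [φ, zero_smul, add_zero]
  have hconst : c0 / 4 ^ (r - 1) * s ^ (r - 2) = c0 * (s / 4) ^ (r - 2) * (1 - 3 / 4) := by
    rw [Real.div_rpow hs.le (by norm_num), show r - 1 = (r - 2) + 1 by ring,
      Real.rpow_add_one (by norm_num)]
    field_simp
    norm_num
  rw [minner_sub_left, ← hφ₁, ← hφ₀, mul_right_comm, hconst]
  linarith

theorem stmt_6_general (d : ℕ) (r : ℝ) (hr : 2 < r)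
    (S : (Fin d → Fin d → ℝ) → (Fin d → Fin d → ℝ))
    (hS : ContDiff ℝ 1 S)
    (c0 c1 : ℝ) (hc0 : 0 < c0)
    (h1 : ∀ B D, Symm B → Symm D →
      c0 * (1 + frob D) ^ (r - 2) * frob B ^ 2 ≤ minner (fderiv ℝ S D B) B ∧
      minner (fderiv ℝ S D B) B ≤ c1 * (1 + frob D) ^ (r - 2) * frob B ^ 2) :
    ∃ c3 > 0, ∀ B D, Symm B → Symm D →
      minner (S B - S D) (B - D) ≥
        c3 * frob (B - D) ^ 2 * (1 + frob B + frob D) ^ (r - 2) := by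
  have hS' : Differentiable ℝ S := hS.differentiable one_ne_zero
  have h1' B D (hB : Symm B) (hD : Symm D) := (h1 B D hB hD).1
  refine ⟨c0 / 4 ^ (r - 1), by positivity, fun B D hB hD => ?_⟩
  rcases le_total (frob D) (frob B) with hDB | hBD
  · exact minner_sub_ge_of_frob_le hr hc0 hS' h1' hB hD hDB
  · have := minner_sub_ge_of_frob_le hr hc0 hS' h1' hD hB hBD
    rwa [minner_sub_sub_comm, frob_sub_comm, add_right_comm] at this

/-- strict monotonicity of the stress tensor. -/
theorem stmt_6 (d : ℕ) (r : ℝ) (hr : 2 < r)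
    (S : (Fin d → Fin d → ℝ) → (Fin d → Fin d → ℝ))
    (hS : ContDiff ℝ 1 S) (hS0 : S 0 = 0)
    (hSsym : ∀ D, Symm D → Symm (S D))
    (c0 c1 c2 : ℝ) (hc0 : 0 < c0) (hc1 : 0 < c1) (hc2 : 0 < c2)
    (h1 : ∀ B D, Symm B → Symm D →
      c0 * (1 + frob D) ^ (r - 2) * frob B ^ 2 ≤ minner (fderiv ℝ S D B) B ∧
      minner (fderiv ℝ S D B) B ≤ c1 * (1 + frob D) ^ (r - 2) * frob B ^ 2)
    (h2 : ∀ B D, Symm B → Symm D →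
      frob (fderiv ℝ S D B) ≤ c2 * (1 + frob D) ^ (r - 2) * frob B) :
    ∃ c3 > 0, ∀ B D, Symm B → Symm D →
      minner (S B - S D) (B - D) ≥
        c3 * frob (B - D) ^ 2 * (1 + frob B + frob D) ^ (r - 2) :=
  stmt_6_general d r hr S hS c0 c1 hc0 h1
end
end

section
/- Let d ≥ 1, r ∈ (2,∞) and μ0, μ1 > 0, and define S : M^d_sym → M^d_sym by S(D) = (μ0 + μ1|D|)^{r−2} D. Then S is continuously differentiable on M^d_sym, S(0) = 0, and there exist constants c0, c1, c2 > 0, depending only on μ0, μ1, r and d, such that for all B, D ∈ M^d_sym: c0(1+|D|)^{r−2}|B|² ≤ S'(D)[B] : B ≤ c1(1+|D|)^{r−2}|B|² and |S'(D)[B]| ≤ c2(1+|D|)^{r−2}|B|, where S'(D)[B] is the derivative of S at D applied to B. -/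
/-!
Identifying `d × d` matrices with `EuclideanSpace ℝ (Fin d × Fin d)` turns `frob` into the norm,
`minner` into the inner product and `S` into the radial map `x ↦ f ‖x‖ • x` with
`f t = (μ0 + μ1 t)^(r-2)`. Away from `0` its derivative is
`f ‖x‖ • id + (f' ‖x‖ / ‖x‖) ⟪x, ·⟫ x`, at `0` it is `f 0 • id`, and the rank-one correction has
operator norm `|f' ‖x‖| ‖x‖ → 0`, so the map is `C¹`. Since `f' ≥ 0` and `t f' t ≤ (r - 2) f t`,
`f ‖x‖ ‖b‖² ≤ ⟪S'(x) b, b⟫` and `‖S'(x) b‖ ≤ (r - 1) f ‖x‖ ‖b‖`, while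
`f t` lies between `min μ0 μ1 ^ (r-2) (1 + t)^(r-2)` and `max μ0 μ1 ^ (r-2) (1 + t)^(r-2)`.
-/

open MeasureTheory Real

noncomputable section

/-- The specific stress tensor `S(D) = (μ0 + μ1 |D|)^{r-2} D`. -/
def Sgen (d : ℕ) (r μ0 μ1 : ℝ) : (Fin d → Fin d → ℝ) → (Fin d → Fin d → ℝ) :=
  fun D i j => (μ0 + μ1 * frob D) ^ (r - 2) * D i j

open Asymptotics Topology

section

variable {E : Type*} [NormedAddCommGroup E] [NormedSpace ℝ E]

theorem hasFDerivAt_smul_self_zero {g : E → ℝ} (hg : ContinuousAt g 0) :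
    HasFDerivAt (fun y => g y • y) (g 0 • ContinuousLinearMap.id ℝ E) 0 := by
  refine .of_isLittleO ?_
  have hsmall : (fun y => g y - g 0) =o[𝓝 0] (fun _ => (1 : ℝ)) :=
    (isLittleO_one_iff ℝ).2 (tendsto_sub_nhds_zero_iff.2 hg)
  simpa [sub_smul] using hsmall.smul_isBigO (isBigO_refl (fun y : E => y) (𝓝 0))

end

section Radial

variable {H : Type*} [NormedAddCommGroup H] [InnerProductSpace ℝ H] {f f' : ℝ → ℝ}

/-- At `x = 0` the rank-one term vanishes because `f' 0 / 0 = 0`, which is what makes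
`radialDeriv f f' 0 = f 0 • id` the derivative there. -/
def radialDeriv (f f' : ℝ → ℝ) (x : H) : H →L[ℝ] H :=
  f ‖x‖ • ContinuousLinearMap.id ℝ H + ((f' ‖x‖ / ‖x‖) • innerSL ℝ x).smulRight x

theorem radialDeriv_apply (x b : H) :
    radialDeriv f f' x b = f ‖x‖ • b + (f' ‖x‖ / ‖x‖ * inner ℝ x b) • x := by
  simp [radialDeriv]

theorem radialDeriv_zero : radialDeriv f f' (0 : H) = f 0 • ContinuousLinearMap.id ℝ H := by
  ext b
  simp [radialDeriv]

theorem norm_smulRight_innerSL_self (f' : ℝ → ℝ) (x : H) :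
    ‖((f' ‖x‖ / ‖x‖) • innerSL ℝ x).smulRight x‖ = |f' ‖x‖| * ‖x‖ := by
  rw [ContinuousLinearMap.norm_smulRight_apply, norm_smul, innerSL_apply_norm, Real.norm_eq_abs,
    abs_div, abs_norm]
  rcases eq_or_ne ‖x‖ 0 with hx | hx
  · simp [hx]
  · field_simp

theorem hasFDerivAt_norm_of_ne_zero {x : H} (hx : x ≠ 0) :
    HasFDerivAt (fun y : H => ‖y‖) (‖x‖⁻¹ • innerSL ℝ x) x := by
  have h := (hasStrictFDerivAt_norm_sq x).hasFDerivAt.sqrt (by simpa using hx)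
  simp only [Real.sqrt_sq (norm_nonneg _)] at h
  convert h using 1
  ext b
  simp only [smul_apply, coe_innerSL_apply, smul_eq_mul, one_div, mul_inv_rev,
    two_smul, smul_add, add_apply]
  field_simp
  ring

theorem HasDerivAt.hasFDerivAt_norm_smul {x : H} (hx : x ≠ 0) (hf : HasDerivAt f (f' ‖x‖) ‖x‖) :
    HasFDerivAt (fun y : H => f ‖y‖ • y) (radialDeriv f f' x) x := by
  refine ((hf.comp_hasFDerivAt x (hasFDerivAt_norm_of_ne_zero hx)).smul (hasFDerivAt_id x)).congr_fderiv ?_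
  ext b
  simp [radialDeriv, smul_smul, div_eq_mul_inv]

theorem hasFDerivAt_norm_smul (hf : ∀ t, 0 ≤ t → HasDerivAt f (f' t) t) (x : H) :
    HasFDerivAt (fun y : H => f ‖y‖ • y) (radialDeriv f f' x) x := by
  rcases eq_or_ne x 0 with rfl | hx
  · rw [radialDeriv_zero]
    have := hasFDerivAt_smul_self_zero (g := fun y : H => f ‖y‖)
      (((hf 0 le_rfl).continuousAt.comp_of_eq continuous_norm.continuousAt (by simp)))
    simpa using this
  · exact (hf _ (norm_nonneg x)).hasFDerivAt_norm_smul hx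

theorem continuous_radialDeriv (hf : ∀ t, 0 ≤ t → HasDerivAt f (f' t) t)
    (hf' : ContinuousOn f' (Set.Ici 0)) : Continuous (radialDeriv f f' : H → H →L[ℝ] H) := by
  have hfn : Continuous fun x : H => f ‖x‖ :=
    continuous_iff_continuousAt.2 fun x =>
      (hf _ (norm_nonneg x)).continuousAt.comp continuous_norm.continuousAt
  have hf'n : Continuous fun x : H => f' ‖x‖ :=
    hf'.comp_continuous continuous_norm fun x => norm_nonneg x
  refine continuous_iff_continuousAt.2 fun x => ?_
  refine (hfn.smul continuous_const).continuousAt.add ?_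
  rcases eq_or_ne x 0 with rfl | hx
  · have hzero : ((f' ‖(0 : H)‖ / ‖(0 : H)‖) • innerSL ℝ (0 : H)).smulRight (0 : H) = 0 := by
      simp
    rw [ContinuousAt, hzero, tendsto_zero_iff_norm_tendsto_zero]
    have hcont : Continuous fun x : H => |f' ‖x‖| * ‖x‖ := hf'n.abs.mul continuous_norm
    simpa only [norm_smulRight_innerSL_self, norm_zero, mul_zero] using hcont.tendsto 0
  · have hc : ContinuousAt (fun x : H => f' ‖x‖ / ‖x‖) x :=
      hf'n.continuousAt.div continuous_norm.continuousAt (norm_ne_zero_iff.2 hx)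
    have hsmulRight : Continuous fun p : (H →L[ℝ] ℝ) × H => p.1.smulRight p.2 :=
      isBoundedBilinearMap_smulRight.continuous
    exact hsmulRight.continuousAt.comp ((hc.smul (innerSL ℝ).continuous.continuousAt).prodMk
      continuousAt_id)

theorem contDiff_norm_smul (hf : ∀ t, 0 ≤ t → HasDerivAt f (f' t) t)
    (hf' : ContinuousOn f' (Set.Ici 0)) : ContDiff ℝ 1 (fun y : H => f ‖y‖ • y) := by
  have hfderiv : fderiv ℝ (fun y : H => f ‖y‖ • y) = radialDeriv f f' :=
    funext fun x => (hasFDerivAt_norm_smul hf x).fderiv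
  refine contDiff_one_iff_fderiv.2 ⟨fun x => (hasFDerivAt_norm_smul hf x).differentiableAt, ?_⟩
  rw [hfderiv]
  exact continuous_radialDeriv hf hf'

theorem inner_radialDeriv_apply_self (x b : H) :
    inner ℝ (radialDeriv f f' x b) b = f ‖x‖ * ‖b‖ ^ 2 + f' ‖x‖ / ‖x‖ * inner ℝ x b ^ 2 := by
  rw [radialDeriv_apply, inner_add_left, real_inner_smul_left, real_inner_smul_left,
    real_inner_self_eq_norm_sq]
  ring

theorem le_inner_radialDeriv_apply_self {x : H} (hf' : 0 ≤ f' ‖x‖) (b : H) :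
    f ‖x‖ * ‖b‖ ^ 2 ≤ inner ℝ (radialDeriv f f' x b) b := by
  rw [inner_radialDeriv_apply_self]
  have : 0 ≤ f' ‖x‖ / ‖x‖ * inner ℝ x b ^ 2 := by positivity
  linarith

theorem norm_radialDeriv_le (x : H) : ‖radialDeriv f f' x‖ ≤ |f ‖x‖| + |f' ‖x‖| * ‖x‖ := by
  calc ‖radialDeriv f f' x‖
      ≤ ‖f ‖x‖ • ContinuousLinearMap.id ℝ H‖ + ‖((f' ‖x‖ / ‖x‖) • innerSL ℝ x).smulRight x‖ :=
        norm_add_le _ _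
    _ ≤ |f ‖x‖| + |f' ‖x‖| * ‖x‖ := by
        rw [norm_smulRight_innerSL_self, norm_smul, Real.norm_eq_abs]
        gcongr
        exact mul_le_of_le_one_right (abs_nonneg _) ContinuousLinearMap.norm_id_le

end Radial

def viscosity (r μ0 μ1 t : ℝ) : ℝ := (μ0 + μ1 * t) ^ (r - 2)

def viscosityDeriv (r μ0 μ1 t : ℝ) : ℝ := μ1 * (r - 2) * (μ0 + μ1 * t) ^ (r - 2 - 1)

section Viscosity

variable {r μ0 μ1 t : ℝ}

theorem hasDerivAt_viscosity (hμ0 : 0 < μ0) (hμ1 : 0 ≤ μ1) (ht : 0 ≤ t) :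
    HasDerivAt (viscosity r μ0 μ1) (viscosityDeriv r μ0 μ1 t) t := by
  have hlin : HasDerivAt (fun s : ℝ => μ0 + μ1 * s) μ1 t := by
    simpa using ((hasDerivAt_id t).const_mul μ1).const_add μ0
  exact hlin.rpow_const (Or.inl (by positivity))

theorem continuousOn_viscosityDeriv (hμ0 : 0 < μ0) (hμ1 : 0 ≤ μ1) :
    ContinuousOn (viscosityDeriv r μ0 μ1) (Set.Ici 0) := by
  refine continuousOn_const.mul (ContinuousOn.rpow_const (by fun_prop) fun s hs => ?_)
  exact Or.inl (by have : (0 : ℝ) ≤ s := hs; positivity)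

theorem viscosityDeriv_nonneg (hr : 2 ≤ r) (hμ0 : 0 < μ0) (hμ1 : 0 ≤ μ1) (ht : 0 ≤ t) :
    0 ≤ viscosityDeriv r μ0 μ1 t := by
  have : 0 ≤ r - 2 := by linarith
  unfold viscosityDeriv
  positivity

theorem viscosityDeriv_mul_le (hr : 2 ≤ r) (hμ0 : 0 < μ0) (hμ1 : 0 ≤ μ1) (ht : 0 ≤ t) :
    viscosityDeriv r μ0 μ1 t * t ≤ (r - 2) * viscosity r μ0 μ1 t := by
  have hbase : 0 < μ0 + μ1 * t := by positivity
  have hcoeff : 0 ≤ (r - 2) * (μ0 + μ1 * t) ^ (r - 2 - 1) := by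
    have : 0 ≤ r - 2 := by linarith
    positivity
  calc viscosityDeriv r μ0 μ1 t * t = (r - 2) * (μ0 + μ1 * t) ^ (r - 2 - 1) * (μ1 * t) := by
        unfold viscosityDeriv; ring
    _ ≤ (r - 2) * (μ0 + μ1 * t) ^ (r - 2 - 1) * (μ0 + μ1 * t) := by gcongr; linarith
    _ = (r - 2) * viscosity r μ0 μ1 t := by
        rw [mul_assoc, ← Real.rpow_add_one hbase.ne', sub_add_cancel, viscosity]

theorem min_rpow_mul_le_viscosity (hr : 2 ≤ r) (hμ0 : 0 < μ0) (hμ1 : 0 ≤ μ1) (ht : 0 ≤ t) :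
    min μ0 μ1 ^ (r - 2) * (1 + t) ^ (r - 2) ≤ viscosity r μ0 μ1 t := by
  rw [← Real.mul_rpow (le_min hμ0.le hμ1) (by positivity), viscosity]
  refine Real.rpow_le_rpow (by positivity) ?_ (by linarith)
  nlinarith [min_le_left μ0 μ1, min_le_right μ0 μ1]

theorem viscosity_le_max_rpow_mul (hr : 2 ≤ r) (hμ0 : 0 < μ0) (hμ1 : 0 ≤ μ1) (ht : 0 ≤ t) :
    viscosity r μ0 μ1 t ≤ max μ0 μ1 ^ (r - 2) * (1 + t) ^ (r - 2) := by
  rw [← Real.mul_rpow (hμ0.le.trans (le_max_left _ _)) (by positivity), viscosity]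
  refine Real.rpow_le_rpow (by positivity) ?_ (by linarith)
  nlinarith [le_max_left μ0 μ1, le_max_right μ0 μ1]

end Viscosity

section PowerLaw

variable {H : Type*} [NormedAddCommGroup H] [InnerProductSpace ℝ H] {r μ0 μ1 : ℝ}

theorem min_rpow_mul_le_inner_radialDeriv_viscosity (hr : 2 ≤ r) (hμ0 : 0 < μ0) (hμ1 : 0 ≤ μ1)
    (x b : H) :
    min μ0 μ1 ^ (r - 2) * (1 + ‖x‖) ^ (r - 2) * ‖b‖ ^ 2 ≤
      inner ℝ (radialDeriv (viscosity r μ0 μ1) (viscosityDeriv r μ0 μ1) x b) b :=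
  calc min μ0 μ1 ^ (r - 2) * (1 + ‖x‖) ^ (r - 2) * ‖b‖ ^ 2
      ≤ viscosity r μ0 μ1 ‖x‖ * ‖b‖ ^ 2 := by
        gcongr
        exact min_rpow_mul_le_viscosity hr hμ0 hμ1 (norm_nonneg x)
    _ ≤ _ := le_inner_radialDeriv_apply_self
        (viscosityDeriv_nonneg hr hμ0 hμ1 (norm_nonneg x)) b

theorem norm_radialDeriv_viscosity_apply_le (hr : 2 ≤ r) (hμ0 : 0 < μ0) (hμ1 : 0 ≤ μ1)
    (x b : H) :
    ‖radialDeriv (viscosity r μ0 μ1) (viscosityDeriv r μ0 μ1) x b‖ ≤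
      (r - 1) * max μ0 μ1 ^ (r - 2) * (1 + ‖x‖) ^ (r - 2) * ‖b‖ := by
  have hvisc : 0 ≤ viscosity r μ0 μ1 ‖x‖ := by unfold viscosity; positivity
  have hderiv := viscosityDeriv_nonneg hr hμ0 hμ1 (norm_nonneg x)
  calc ‖radialDeriv (viscosity r μ0 μ1) (viscosityDeriv r μ0 μ1) x b‖
      ≤ (|viscosity r μ0 μ1 ‖x‖| + |viscosityDeriv r μ0 μ1 ‖x‖| * ‖x‖) * ‖b‖ :=
        (ContinuousLinearMap.le_opNorm _ _).trans (by gcongr; exact norm_radialDeriv_le x)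
    _ ≤ (r - 1) * viscosity r μ0 μ1 ‖x‖ * ‖b‖ := by
        rw [abs_of_nonneg hvisc, abs_of_nonneg hderiv]
        gcongr
        linarith [viscosityDeriv_mul_le hr hμ0 hμ1 (norm_nonneg x)]
    _ ≤ (r - 1) * (max μ0 μ1 ^ (r - 2) * (1 + ‖x‖) ^ (r - 2)) * ‖b‖ := by
        gcongr
        · linarith
        · exact viscosity_le_max_rpow_mul hr hμ0 hμ1 (norm_nonneg x)
    _ = (r - 1) * max μ0 μ1 ^ (r - 2) * (1 + ‖x‖) ^ (r - 2) * ‖b‖ := by ring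

theorem inner_radialDeriv_viscosity_apply_le (hr : 2 ≤ r) (hμ0 : 0 < μ0) (hμ1 : 0 ≤ μ1)
    (x b : H) :
    inner ℝ (radialDeriv (viscosity r μ0 μ1) (viscosityDeriv r μ0 μ1) x b) b ≤
      (r - 1) * max μ0 μ1 ^ (r - 2) * (1 + ‖x‖) ^ (r - 2) * ‖b‖ ^ 2 :=
  calc inner ℝ (radialDeriv (viscosity r μ0 μ1) (viscosityDeriv r μ0 μ1) x b) b
      ≤ ‖radialDeriv (viscosity r μ0 μ1) (viscosityDeriv r μ0 μ1) x b‖ * ‖b‖ :=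
        real_inner_le_norm _ _
    _ ≤ (r - 1) * max μ0 μ1 ^ (r - 2) * (1 + ‖x‖) ^ (r - 2) * ‖b‖ * ‖b‖ := by
        gcongr
        exact norm_radialDeriv_viscosity_apply_le hr hμ0 hμ1 x b
    _ = (r - 1) * max μ0 μ1 ^ (r - 2) * (1 + ‖x‖) ^ (r - 2) * ‖b‖ ^ 2 := by ring

end PowerLaw

def frobEquiv (d : ℕ) : (Fin d → Fin d → ℝ) ≃L[ℝ] EuclideanSpace ℝ (Fin d × Fin d) :=
  (LinearEquiv.curry ℝ ℝ (Fin d) (Fin d)).symm.toContinuousLinearEquiv.trans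
    (EuclideanSpace.equiv (Fin d × Fin d) ℝ).symm

theorem frobEquiv_apply {d : ℕ} (M : Fin d → Fin d → ℝ) (p : Fin d × Fin d) :
    frobEquiv d M p = M p.1 p.2 := rfl

theorem frob_eq_norm_frobEquiv {d : ℕ} (M : Fin d → Fin d → ℝ) :
    frob M = ‖frobEquiv d M‖ := by
  simp [frob, EuclideanSpace.norm_eq, Fintype.sum_prod_type, frobEquiv_apply]

theorem minner_eq_inner_frobEquiv {d : ℕ} (A B : Fin d → Fin d → ℝ) :
    minner A B = inner ℝ (frobEquiv d A) (frobEquiv d B) := by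
  simp [minner, PiLp.inner_apply, Fintype.sum_prod_type, frobEquiv_apply, mul_comm]

theorem Sgen_eq_comp (d : ℕ) (r μ0 μ1 : ℝ) :
    Sgen d r μ0 μ1 = (frobEquiv d).symm ∘
      (fun y => viscosity r μ0 μ1 ‖y‖ • y) ∘ frobEquiv d := by
  ext D i j
  simp [Sgen, viscosity, frob_eq_norm_frobEquiv]

theorem fderiv_Sgen_apply {d : ℕ} {r μ0 μ1 : ℝ} (hμ0 : 0 < μ0) (hμ1 : 0 ≤ μ1)
    (D B : Fin d → Fin d → ℝ) :
    fderiv ℝ (Sgen d r μ0 μ1) D B = (frobEquiv d).symm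
      (radialDeriv (viscosity r μ0 μ1) (viscosityDeriv r μ0 μ1)
        (frobEquiv d D) (frobEquiv d B)) := by
  have hradial := hasFDerivAt_norm_smul
    (fun t ht => hasDerivAt_viscosity (r := r) hμ0 hμ1 ht) (frobEquiv d D)
  rw [Sgen_eq_comp, ((frobEquiv d).symm.hasFDerivAt.comp D
    (hradial.comp D (frobEquiv d).hasFDerivAt)).fderiv]
  rfl

theorem stmt_7_general (d : ℕ) (r μ0 μ1 : ℝ)
    (hr : 2 < r) (hμ0 : 0 < μ0) (hμ1 : 0 < μ1) :
    ContDiff ℝ 1 (Sgen d r μ0 μ1) ∧ Sgen d r μ0 μ1 0 = 0 ∧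
    ∃ c0 > 0, ∃ c1 > 0, ∃ c2 > 0,
      ∀ B D : Fin d → Fin d → ℝ, Symm B → Symm D →
        (c0 * (1 + frob D) ^ (r - 2) * frob B ^ 2
            ≤ minner (fderiv ℝ (Sgen d r μ0 μ1) D B) B ∧
          minner (fderiv ℝ (Sgen d r μ0 μ1) D B) B
            ≤ c1 * (1 + frob D) ^ (r - 2) * frob B ^ 2) ∧
        frob (fderiv ℝ (Sgen d r μ0 μ1) D B) ≤ c2 * (1 + frob D) ^ (r - 2) * frob B := by
  have hcontDiff : ContDiff ℝ 1 (Sgen d r μ0 μ1) := by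
    rw [Sgen_eq_comp]
    exact (frobEquiv d).symm.contDiff.comp
      ((contDiff_norm_smul (fun t ht => hasDerivAt_viscosity hμ0 hμ1.le ht)
        (continuousOn_viscosityDeriv hμ0 hμ1.le)).comp (frobEquiv d).contDiff)
  have hc0 : 0 < min μ0 μ1 ^ (r - 2) := by have := lt_min hμ0 hμ1; positivity
  have hc1 : 0 < (r - 1) * max μ0 μ1 ^ (r - 2) := by
    have := hμ0.trans_le (le_max_left μ0 μ1)
    have : 0 < r - 1 := by linarith
    positivity
  refine ⟨hcontDiff, by ext; simp [Sgen], _, hc0, _, hc1, _, hc1, fun B D _ _ => ?_⟩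
  simp only [fderiv_Sgen_apply hμ0 hμ1.le, minner_eq_inner_frobEquiv, frob_eq_norm_frobEquiv,
    ContinuousLinearEquiv.apply_symm_apply]
  exact ⟨⟨min_rpow_mul_le_inner_radialDeriv_viscosity hr.le hμ0 hμ1.le _ _,
    inner_radialDeriv_viscosity_apply_le hr.le hμ0 hμ1.le _ _⟩,
    norm_radialDeriv_viscosity_apply_le hr.le hμ0 hμ1.le _ _⟩

/-- the typical example satisfies the assumptions (h1) and (h2). -/
theorem stmt_7 (d : ℕ) (hd : 1 ≤ d) (r μ0 μ1 : ℝ)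
    (hr : 2 < r) (hμ0 : 0 < μ0) (hμ1 : 0 < μ1) :
    ContDiff ℝ 1 (Sgen d r μ0 μ1) ∧ Sgen d r μ0 μ1 0 = 0 ∧
    ∃ c0 > 0, ∃ c1 > 0, ∃ c2 > 0,
      ∀ B D : Fin d → Fin d → ℝ, Symm B → Symm D →
        (c0 * (1 + frob D) ^ (r - 2) * frob B ^ 2
            ≤ minner (fderiv ℝ (Sgen d r μ0 μ1) D B) B ∧
          minner (fderiv ℝ (Sgen d r μ0 μ1) D B) B
            ≤ c1 * (1 + frob D) ^ (r - 2) * frob B ^ 2) ∧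
        frob (fderiv ℝ (Sgen d r μ0 μ1) D B) ≤ c2 * (1 + frob D) ^ (r - 2) * frob B :=
  stmt_7_general d r μ0 μ1 hr hμ0 hμ1
end
end

section
/- Let u : ℝ² → ℝ² be a smooth 2π-periodic vector field with div u = 0 on ℝ². Then ∫_Ω ∑_{i,j,k=1}^{2} ∂_k u_j(x) ∂_j u_i(x) ∂_k u_i(x) dx = 0, where Ω = (0,2π)². -/
open MeasureTheory Real

noncomputable section

/-- in two dimensions the cubic gradient term vanishes. -/
theorem stmt_8 (u : (Fin 2 → ℝ) → (Fin 2 → ℝ))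
    (hu : ContDiff ℝ (⊤ : ℕ∞) u) (hup : IsPer u) (hdiv : DivFree u) :
    ∫ x in box 2, ∑ i, ∑ j, ∑ k,
      pd (fun y => u y j) k x * pd (fun y => u y i) j x * pd (fun y => u y i) k x = 0 := by
  have h0 : ∀ x, (∑ i, ∑ j, ∑ k : Fin 2,
      pd (fun y => u y j) k x * pd (fun y => u y i) j x * pd (fun y => u y i) k x) = 0 := by
    intro x
    have h := hdiv x
    simp only [Fin.sum_univ_two] at h ⊢
    set a := pd (fun y => u y 0) 0 x
    set b := pd (fun y => u y 0) 1 x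
    set c := pd (fun y => u y 1) 0 x
    set d := pd (fun y => u y 1) 1 x
    linear_combination (a^2 - a*d + d^2 + b*c + b^2 + c^2) * h
  simp only [h0, integral_zero]
end
end

section
/- Let d ≥ 2, let S : M^d_sym → M^d_sym be continuously differentiable, and let u : ℝ^d → ℝ^d be a smooth 2π-periodic vector field. Then ∫_Ω div(S(Du))(x) · Δu(x) dx = ∑_{m=1}^d ∫_Ω S'(Du(x))[ D(∂_m u)(x) ] : D(∂_m u)(x) dx, where (div S(Du))_i = ∑_j ∂_j ( S(Du)_{ij} ), Δu_i = ∑_k ∂_k∂_k u_i, ∂_m u denotes the vector field of m-th partial derivatives of u, and S'(A)[B] is the derivative of S at A applied to B. -/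
open MeasureTheory Real

noncomputable section

namespace Stmt11

variable {d : ℕ}

/-! ### Differentiability and continuity of `pd` -/

lemma contDiff_pd {f : (Fin d → ℝ) → ℝ} (hf : ContDiff ℝ (⊤ : ℕ∞) f) (j : Fin d) :
    ContDiff ℝ (⊤ : ℕ∞) (pd f j) := by
  have h : ContDiff ℝ (⊤ : ℕ∞) (fderiv ℝ f) := hf.fderiv_right (by simp)
  exact (ContinuousLinearMap.apply ℝ ℝ ((Pi.single j 1 : Fin d → ℝ))).contDiff.comp h

lemma continuous_pd {f : (Fin d → ℝ) → ℝ} (hf : ContDiff ℝ 1 f) (j : Fin d) :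
    Continuous (pd f j) := by
  have := hf.continuous_fderiv one_ne_zero
  exact ((ContinuousLinearMap.apply ℝ ℝ ((Pi.single j 1 : Fin d → ℝ))).continuous).comp this

lemma isPer_pd {f : (Fin d → ℝ) → ℝ} (hf : Differentiable ℝ f) (hp : IsPer f) (j : Fin d) :
    IsPer (pd f j) := by
  intro x i
  have hfe : (fun y => f (y + Pi.single i (2 * π))) = f := funext fun y => hp y i
  unfold pd
  have h1 : fderiv ℝ (fun y => f (y + Pi.single i (2 * π))) x
      = fderiv ℝ f (x + Pi.single i (2 * π)) := by
    have := ((hf (x + Pi.single i (2 * π))).hasFDerivAt.comp x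
      ((hasFDerivAt_id x).add_const (Pi.single i (2 * π)))).fderiv
    simpa [Function.comp_def] using this
  rw [← h1, hfe]

lemma pd_comm {f : (Fin d → ℝ) → ℝ} (hf : ContDiff ℝ (⊤ : ℕ∞) f) (j m : Fin d) (x : Fin d → ℝ) :
    pd (pd f j) m x = pd (pd f m) j x := by
  have hsym : IsSymmSndFDerivAt ℝ f x := (hf.contDiffAt).isSymmSndFDerivAt (by
    rw [minSmoothness_of_isRCLikeNormedField]; exact WithTop.coe_le_coe.mpr le_top)
  have key : ∀ (v w : Fin d → ℝ), fderiv ℝ (fun y => fderiv ℝ f y v) x w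
      = fderiv ℝ (fderiv ℝ f) x w v := by
    intro v w
    have hdf : DifferentiableAt ℝ (fderiv ℝ f) x :=
      (hf.fderiv_right (m := (⊤ : ℕ∞)) (by simp)).differentiable (by simp) x
    have h2 := ((ContinuousLinearMap.apply ℝ ℝ v).hasFDerivAt.comp x hdf.hasFDerivAt).fderiv
    have h3 : (fun y => fderiv ℝ f y v) = (⇑((ContinuousLinearMap.apply ℝ ℝ) v) ∘ fderiv ℝ f) := rfl
    rw [h3, h2]; rfl
  unfold pd
  rw [key, key, hsym.eq]

/-! ### Algebraic rules for `pd` -/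

lemma pd_add {f g : (Fin d → ℝ) → ℝ} (hf : Differentiable ℝ f) (hg : Differentiable ℝ g)
    (j : Fin d) (x : Fin d → ℝ) :
    pd (fun y => f y + g y) j x = pd f j x + pd g j x := by
  unfold pd
  rw [fderiv_fun_add (hf x) (hg x)]
  rfl

lemma pd_div_const {f : (Fin d → ℝ) → ℝ} (hf : Differentiable ℝ f) (c : ℝ) (j : Fin d)
    (x : Fin d → ℝ) :
    pd (fun y => f y / c) j x = pd f j x / c := by
  unfold pd
  have h1 : (fun y => f y / c) = fun y => (1/c) * f y := by funext y; ring
  rw [h1, fderiv_const_mul (hf x) (1/c)]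
  simp only [ContinuousLinearMap.smul_apply, smul_eq_mul]
  ring

lemma pd_mul {f g : (Fin d → ℝ) → ℝ} (hf : Differentiable ℝ f) (hg : Differentiable ℝ g)
    (j : Fin d) (x : Fin d → ℝ) :
    pd (fun y => f y * g y) j x = pd f j x * g x + f x * pd g j x := by
  unfold pd
  rw [fderiv_fun_mul (hf x) (hg x)]
  simp only [ContinuousLinearMap.add_apply, ContinuousLinearMap.smul_apply, smul_eq_mul]
  ring

/-! ### Integration facts -/

lemma measurableSet_box : MeasurableSet (box d) :=
  MeasurableSet.univ_pi fun _ => measurableSet_Ioo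

lemma integrableOn_box {g : (Fin d → ℝ) → ℝ} (hg : Continuous g) :
    IntegrableOn g (box d) := by
  have hK : IsCompact (Set.univ.pi fun _ : Fin d => Set.Icc (0:ℝ) (2*π)) :=
    isCompact_univ_pi fun _ => isCompact_Icc
  exact (hg.continuousOn.integrableOn_compact hK).mono_set
    (Set.pi_mono fun i _ => Set.Ioo_subset_Icc_self)

lemma insertNth_eq_add {n : ℕ} (j : Fin (n+1)) (t : ℝ) (y : Fin n → ℝ) :
    (j.insertNth t y : Fin (n+1) → ℝ)
      = (j.insertNth 0 y : Fin (n+1) → ℝ) + t • (Pi.single j 1 : Fin (n+1) → ℝ) := by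
  ext k
  rcases eq_or_ne k j with rfl | hk
  · simp
  · obtain ⟨i, rfl⟩ := Fin.exists_succAbove_eq hk
    simp [Pi.single_eq_of_ne hk]

lemma insertNth_top {n : ℕ} (j : Fin (n+1)) (y : Fin n → ℝ) :
    (j.insertNth (2*π) y : Fin (n+1) → ℝ)
      = (j.insertNth 0 y : Fin (n+1) → ℝ) + Pi.single j (2*π) := by
  ext k
  rcases eq_or_ne k j with rfl | hk
  · simp
  · obtain ⟨i, rfl⟩ := Fin.exists_succAbove_eq hk
    simp [Pi.single_eq_of_ne hk]

lemma hasDerivAt_insertNth {n : ℕ} {f : (Fin (n+1) → ℝ) → ℝ} (hf : Differentiable ℝ f)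
    (j : Fin (n+1)) (y : Fin n → ℝ) (t : ℝ) :
    HasDerivAt (fun s => f (j.insertNth s y)) (pd f j (j.insertNth t y)) t := by
  set c : Fin (n+1) → ℝ := j.insertNth 0 y with hc
  set v : Fin (n+1) → ℝ := Pi.single j 1 with hv
  have hline : HasDerivAt (fun s : ℝ => c + s • v) v t := by
    simpa using ((hasDerivAt_id t).smul_const v).const_add c
  have hline' : HasDerivAt (fun s : ℝ => (j.insertNth s y : Fin (n+1) → ℝ)) v t := by
    have heq : (fun s : ℝ => (j.insertNth s y : Fin (n+1) → ℝ)) = fun s => c + s • v :=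
      funext fun s => insertNth_eq_add j s y
    rw [heq]; exact hline
  exact HasFDerivAt.comp_hasDerivAt t (hf _).hasFDerivAt hline'

lemma inner_integral_zero {n : ℕ} {f : (Fin (n+1) → ℝ) → ℝ} (hf : ContDiff ℝ 1 f)
    (hp : IsPer f) (j : Fin (n+1)) (y : Fin n → ℝ) :
    ∫ t in Set.Ioo 0 (2*π), pd f j (j.insertNth t y) = 0 := by
  have hdf : Differentiable ℝ f := hf.differentiable one_ne_zero
  have hcont : Continuous fun t : ℝ => pd f j (j.insertNth t y) := by
    exact (continuous_pd hf j).comp ((continuous_id (X := ℝ)).finInsertNth j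
      (continuous_const (y := y)))
  rw [← MeasureTheory.integral_Ioc_eq_integral_Ioo,
    ← intervalIntegral.integral_of_le (by positivity : (0:ℝ) ≤ 2*π)]
  rw [intervalIntegral.integral_eq_sub_of_hasDerivAt
    (fun t _ => hasDerivAt_insertNth hdf j y t) (hcont.intervalIntegrable 0 (2*π))]
  rw [insertNth_top, hp]
  ring


lemma integral_pd_zero_succ {n : ℕ} {f : (Fin (n+1) → ℝ) → ℝ} (hf : ContDiff ℝ 1 f)
    (hp : IsPer f) (j : Fin (n+1)) :
    ∫ x in box (n+1), pd f j x = 0 := by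
  set e0 := (MeasurableEquiv.piFinSuccAbove (fun _ : Fin (n+1) => ℝ) j).symm with he0
  set e : (Fin n → ℝ) × ℝ ≃ᵐ (Fin (n+1) → ℝ) := MeasurableEquiv.prodComm.trans e0 with he
  have heapp : ∀ p : (Fin n → ℝ) × ℝ, e p = j.insertNth p.2 p.1 := by
    intro p
    rfl
  have hvol : MeasurePreserving e volume volume := by
    have h1 : MeasurePreserving e0 volume volume :=
      (volume_preserving_piFinSuccAbove (fun _ : Fin (n+1) => ℝ) j).symm
    have h2 : MeasurePreserving (Prod.swap : (Fin n → ℝ) × ℝ → ℝ × (Fin n → ℝ))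
        volume volume := by
      rw [Measure.volume_eq_prod, Measure.volume_eq_prod]
      exact Measure.measurePreserving_swap
    exact h1.comp h2
  have hemb : MeasurableEmbedding e := e.measurableEmbedding
  have hpre : ⇑e ⁻¹' (box (n+1))
      = (Set.univ.pi fun _ : Fin n => Set.Ioo 0 (2*π)) ×ˢ Set.Ioo (0:ℝ) (2*π) := by
    ext p
    simp only [Set.mem_preimage, box, Set.mem_pi, Set.mem_univ, forall_true_left,
      Set.mem_prod, heapp]
    constructor
    · intro h
      refine ⟨fun i => ?_, ?_⟩
      · have := h (j.succAbove i); simpa using this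
      · have := h j; simpa using this
    · rintro ⟨h1, h2⟩ k
      rcases eq_or_ne k j with rfl | hk
      · simpa using h2
      · obtain ⟨i, rfl⟩ := Fin.exists_succAbove_eq hk
        simpa using h1 i
  rw [← hvol.setIntegral_preimage_emb hemb (pd f j) (box (n+1)), hpre]
  have hco : Continuous fun p : (Fin n → ℝ) × ℝ => pd f j (e p) := by
    refine (continuous_pd hf j).comp ?_
    have h3 : Continuous fun p : (Fin n → ℝ) × ℝ =>
        (j.insertNth p.2 p.1 : Fin (n+1) → ℝ) :=
      Continuous.finInsertNth j
        (continuous_snd : Continuous fun p : (Fin n → ℝ) × ℝ => p.2)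
        (continuous_fst : Continuous fun p : (Fin n → ℝ) × ℝ => p.1)
    exact h3
  have hint : IntegrableOn (fun p : (Fin n → ℝ) × ℝ => pd f j (e p))
      ((Set.univ.pi fun _ : Fin n => Set.Ioo 0 (2*π)) ×ˢ Set.Ioo (0:ℝ) (2*π)) := by
    have hK : IsCompact ((Set.univ.pi fun _ : Fin n => Set.Icc (0:ℝ) (2*π)) ×ˢ
        Set.Icc (0:ℝ) (2*π)) :=
      (isCompact_univ_pi fun _ => isCompact_Icc).prod isCompact_Icc
    refine (hco.continuousOn.integrableOn_compact hK).mono_set ?_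
    exact Set.prod_mono (Set.pi_mono fun i _ => Set.Ioo_subset_Icc_self) Set.Ioo_subset_Icc_self
  rw [Measure.volume_eq_prod] at hint ⊢
  rw [MeasureTheory.setIntegral_prod _ hint]
  have : ∀ y ∈ (Set.univ.pi fun _ : Fin n => Set.Ioo (0:ℝ) (2*π)),
      (∫ t in Set.Ioo (0:ℝ) (2*π), pd f j (e (y, t))) = 0 := by
    intro y _
    simp only [heapp]
    exact inner_integral_zero hf hp j y
  rw [MeasureTheory.setIntegral_congr_fun (MeasurableSet.univ_pi fun _ => measurableSet_Ioo) this]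
  simp


lemma integral_pd_zero {f : (Fin d → ℝ) → ℝ} (hf : ContDiff ℝ 1 f)
    (hp : IsPer f) (j : Fin d) :
    ∫ x in box d, pd f j x = 0 := by
  cases d with
  | zero => exact j.elim0
  | succ n => exact integral_pd_zero_succ hf hp j

/-- Integration by parts on the periodic box. -/
lemma ibp {f g : (Fin d → ℝ) → ℝ} (hf : ContDiff ℝ 1 f) (hg : ContDiff ℝ 1 g)
    (hpf : IsPer f) (hpg : IsPer g) (j : Fin d) :
    ∫ x in box d, pd f j x * g x = - ∫ x in box d, f x * pd g j x := by
  have hfd : Differentiable ℝ f := hf.differentiable one_ne_zero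
  have hgd : Differentiable ℝ g := hg.differentiable one_ne_zero
  have hmul : ContDiff ℝ 1 (fun y => f y * g y) := hf.mul hg
  have hpm : IsPer (fun y => f y * g y) := fun x i => by simp [hpf x i, hpg x i]
  have h0 : ∫ x in box d, pd (fun y => f y * g y) j x = 0 := integral_pd_zero hmul hpm j
  have hsplit : ∀ x, pd (fun y => f y * g y) j x = pd f j x * g x + f x * pd g j x :=
    fun x => pd_mul hfd hgd j x
  rw [MeasureTheory.setIntegral_congr_fun measurableSet_box (fun x _ => hsplit x)] at h0
  rw [MeasureTheory.integral_add (f := fun x => pd f j x * g x) (g := fun x => f x * pd g j x)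
    (integrableOn_box ((continuous_pd hf j).mul hgd.continuous))
    (integrableOn_box (hfd.continuous.mul (continuous_pd hg j)))] at h0
  linarith

/-! ### Chain rule and symmetry lemmas -/

/-- Entry `(i,j)` evaluation as a continuous linear map. -/
def evM (i j : Fin d) : (Fin d → Fin d → ℝ) →L[ℝ] ℝ :=
  (ContinuousLinearMap.proj j).comp (ContinuousLinearMap.proj (R := ℝ)
    (φ := fun _ : Fin d => Fin d → ℝ) i)

lemma fderiv_pi_eval {G : (Fin d → ℝ) → (Fin d → Fin d → ℝ)} {x : Fin d → ℝ}
    (hG : DifferentiableAt ℝ G x) (i j : Fin d) (v : Fin d → ℝ) :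
    fderiv ℝ (fun y => G y i j) x v = fderiv ℝ G x v i j := by
  have h := ((evM i j).hasFDerivAt.comp x hG.hasFDerivAt).fderiv
  have h2 : (fun y => G y i j) = ⇑(evM i j) ∘ G := rfl
  rw [h2, h]
  rfl

lemma pd_comp_S {S : (Fin d → Fin d → ℝ) → (Fin d → Fin d → ℝ)} (hS : ContDiff ℝ 1 S)
    {G : (Fin d → ℝ) → (Fin d → Fin d → ℝ)} (hG : Differentiable ℝ G)
    (i j m : Fin d) (x : Fin d → ℝ) :
    pd (fun y => S (G y) i j) m x
      = fderiv ℝ S (G x) (fderiv ℝ G x (Pi.single m 1)) i j := by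
  have hSd : DifferentiableAt ℝ S (G x) := (hS.differentiable one_ne_zero) (G x)
  have h := ((evM i j).hasFDerivAt.comp x
    (hSd.hasFDerivAt.comp x (hG x).hasFDerivAt)).fderiv
  have h2 : (fun y => S (G y) i j) = ⇑(evM i j) ∘ (S ∘ G) := rfl
  unfold pd
  rw [h2, h]
  rfl

lemma symm_symG (v : (Fin d → ℝ) → (Fin d → ℝ)) (x : Fin d → ℝ) : Symm (symG v x) := by
  intro i j
  simp [symG, add_comm]

lemma fderiv_S_symm {S : (Fin d → Fin d → ℝ) → (Fin d → Fin d → ℝ)} (hS : ContDiff ℝ 1 S)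
    (hSsym : ∀ D, Symm D → Symm (S D)) {A B : Fin d → Fin d → ℝ}
    (hA : Symm A) (hB : Symm B) : Symm (fderiv ℝ S A B) := by
  intro i j
  have hline : HasDerivAt (fun t : ℝ => A + t • B) B 0 := by
    simpa using ((hasDerivAt_id (0:ℝ)).smul_const B).const_add A
  have hphi : HasDerivAt (fun t : ℝ => S (A + t • B)) (fderiv ℝ S A B) 0 := by
    have hSd : DifferentiableAt ℝ S A := (hS.differentiable one_ne_zero) A
    have := HasFDerivAt.comp_hasDerivAt (0:ℝ)
      (by simpa using hSd.hasFDerivAt : HasFDerivAt S (fderiv ℝ S A) ((fun t : ℝ => A + t • B) 0))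
      hline
    simpa [Function.comp_def] using this
  have hij : HasDerivAt (fun t : ℝ => S (A + t • B) i j) (fderiv ℝ S A B i j) 0 :=
    HasFDerivAt.comp_hasDerivAt (0:ℝ) (evM i j).hasFDerivAt hphi
  have hji : HasDerivAt (fun t : ℝ => S (A + t • B) j i) (fderiv ℝ S A B j i) 0 :=
    HasFDerivAt.comp_hasDerivAt (0:ℝ) (evM j i).hasFDerivAt hphi
  have heq : (fun t : ℝ => S (A + t • B) i j) = (fun t : ℝ => S (A + t • B) j i) := by
    funext t
    have hsym : Symm (A + t • B) := by
      intro a b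
      simp only [Pi.add_apply, Pi.smul_apply, smul_eq_mul]
      rw [hA a b, hB a b]
    exact hSsym _ hsym i j
  rw [heq] at hij
  exact hij.unique hji


lemma integral_box_sum {ι : Type*} (s : Finset ι) {F : ι → (Fin d → ℝ) → ℝ}
    (hF : ∀ i ∈ s, Continuous (F i)) :
    ∫ x in box d, ∑ i ∈ s, F i x = ∑ i ∈ s, ∫ x in box d, F i x :=
  MeasureTheory.integral_finset_sum s fun i hi => integrableOn_box (hF i hi)

lemma sum_symm_half {d : ℕ} (M b : Fin d → Fin d → ℝ) (hM : Symm M) :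
    (∑ i, ∑ j, M i j * ((b i j + b j i)/2)) = ∑ i, ∑ j, M i j * b i j := by
  have h1 : (∑ i, ∑ j, M i j * b j i) = ∑ i, ∑ j, M i j * b i j := by
    rw [Finset.sum_comm]
    exact Finset.sum_congr rfl fun j _ => Finset.sum_congr rfl fun i _ => by rw [hM]
  have h2 : ∀ i j : Fin d, M i j * ((b i j + b j i)/2)
      = M i j * b i j / 2 + M i j * b j i / 2 := fun i j => by ring
  simp_rw [h2, Finset.sum_add_distrib]
  simp only [← Finset.sum_div]
  rw [h1]
  ring

end Stmt11

open Stmt11 in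
/-- `∫_Ω div(S(Du)) · Δu = ∑ₘ ∫_Ω S'(Du)[D(∂ₘu)] : D(∂ₘu)`. -/
theorem stmt_11 (d : ℕ) (hd : 2 ≤ d)
    (S : (Fin d → Fin d → ℝ) → (Fin d → Fin d → ℝ))
    (hS : ContDiff ℝ 1 S) (hSsym : ∀ D, Symm D → Symm (S D))
    (u : (Fin d → ℝ) → (Fin d → ℝ))
    (hu : ContDiff ℝ (⊤ : ℕ∞) u) (hup : IsPer u) :
    ∫ x in box d,
        ∑ i, (∑ j, pd (fun y => S (symG u y) i j) j x) * lap u i x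
      = ∑ m, ∫ x in box d,
          minner (fderiv ℝ S (symG u x) (symG (fun y k => pd (fun z => u z k) m y) x))
            (symG (fun y k => pd (fun z => u z k) m y) x) := by
  classical
  -- component functions of u
  have hui : ∀ i, ContDiff ℝ (⊤ : ℕ∞) (fun y => u y i) := fun i => contDiff_pi.mp hu i
  have hupi : ∀ i, IsPer (fun y => u y i) := fun i x i0 => congrFun (hup x i0) i
  -- the symmetric gradient as a function
  set G : (Fin d → ℝ) → (Fin d → Fin d → ℝ) := fun y => symG u y with hGdef
  have hGsmooth : ContDiff ℝ (⊤ : ℕ∞) G := by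
    refine contDiff_pi.mpr fun i => contDiff_pi.mpr fun j => ?_
    exact ((contDiff_pd (hui i) j).add (contDiff_pd (hui j) i)).div_const 2
  have hGdiff : Differentiable ℝ G := hGsmooth.differentiable (by simp)
  have hGcont : Continuous G := hGsmooth.continuous
  have hGper : IsPer G := by
    intro x i0
    funext i j
    show symG u (x + Pi.single i0 (2*π)) i j = symG u x i j
    unfold symG gradM
    rw [isPer_pd ((contDiff_pi.mp hu i).differentiable (by simp)) (hupi i) j x i0,
      isPer_pd ((contDiff_pi.mp hu j).differentiable (by simp)) (hupi j) i x i0]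
  -- ∂ₘ u and its symmetric gradient
  set um : Fin d → (Fin d → ℝ) → (Fin d → ℝ) := fun m y k => pd (fun z => u z k) m y with humdef
  have humi : ∀ m i, ContDiff ℝ (⊤ : ℕ∞) (fun y => um m y i) := fun m i => contDiff_pd (hui i) m
  have hBsmooth : ∀ m, ContDiff ℝ (⊤ : ℕ∞) (fun x => symG (um m) x) := by
    intro m
    refine contDiff_pi.mpr fun i => contDiff_pi.mpr fun j => ?_
    exact ((contDiff_pd (humi m i) j).add (contDiff_pd (humi m j) i)).div_const 2
  -- the composed stress components
  have hScij : ∀ i j, ContDiff ℝ 1 (fun y => S (G y) i j) := by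
    intro i j
    exact contDiff_pi.mp (contDiff_pi.mp (hS.comp (hGsmooth.of_le (by simp))) i) j
  have hScper : ∀ i j, IsPer (fun y => S (G y) i j) := by
    intro i j x i0
    show S (G (x + Pi.single i0 (2*π))) i j = S (G x) i j
    rw [hGper x i0]
  -- key pointwise formula: fderiv of G in direction eₘ is the symmetric gradient of ∂ₘu
  have hfderivG : ∀ (m : Fin d) (x : Fin d → ℝ),
      fderiv ℝ G x (Pi.single m 1) = symG (um m) x := by
    intro m x
    funext i j
    have h1 : fderiv ℝ G x (Pi.single m 1) i j
        = fderiv ℝ (fun y => G y i j) x (Pi.single m 1) :=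
      (fderiv_pi_eval (hGdiff x) i j _).symm
    rw [h1]
    have h2 : (fun y => G y i j)
        = fun y => (pd (fun z => u z i) j y + pd (fun z => u z j) i y)/2 := rfl
    show pd (fun y => G y i j) m x = _
    rw [h2]
    have hdi : Differentiable ℝ (pd (fun z => u z i) j) :=
      (contDiff_pd (hui i) j).differentiable (by simp)
    have hdj : Differentiable ℝ (pd (fun z => u z j) i) :=
      (contDiff_pd (hui j) i).differentiable (by simp)
    rw [pd_div_const (f := fun y => pd (fun z => u z i) j y + pd (fun z => u z j) i y) (hdi.add hdj) 2 m x, pd_add hdi hdj m x,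
      pd_comm (hui i) j m x, pd_comm (hui j) i m x]
    rfl
  -- pointwise chain rule
  have hchain : ∀ (i j m : Fin d) (x : Fin d → ℝ),
      pd (fun y => S (G y) i j) m x
        = fderiv ℝ S (G x) (symG (um m) x) i j := by
    intro i j m x
    rw [pd_comp_S hS hGdiff i j m x, hfderivG m x]
  -- continuity of the matrix M
  have hMcont : ∀ (m : Fin d),
      Continuous fun x => fderiv ℝ S (G x) (symG (um m) x) := by
    intro m
    have hfScont : Continuous (fderiv ℝ S) := hS.continuous_fderiv one_ne_zero
    have hBcont : Continuous fun x => symG (um m) x := (hBsmooth m).continuous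
    exact isBoundedBilinearMap_apply.continuous.comp
      (((hfScont.comp hGcont)).prodMk hBcont)
  -- Step A : expand the integrand into a triple sum
  have stepA : ∫ x in box d,
      ∑ i, (∑ j, pd (fun y => S (symG u y) i j) j x) * lap u i x
      = ∑ i, ∑ j, ∑ m, ∫ x in box d,
          pd (fun y => S (G y) i j) j x * pd (pd (fun z => u z i) m) m x := by
    have hptw : ∀ x, (∑ i, (∑ j, pd (fun y => S (symG u y) i j) j x) * lap u i x)
        = ∑ i, ∑ j, ∑ m, pd (fun y => S (G y) i j) j x * pd (pd (fun z => u z i) m) m x := by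
      intro x
      refine Finset.sum_congr rfl fun i _ => ?_
      rw [lap, Finset.sum_mul_sum]
    rw [MeasureTheory.setIntegral_congr_fun measurableSet_box fun x _ => hptw x]
    have hcont3 : ∀ i j m : Fin d, Continuous fun x =>
        pd (fun y => S (G y) i j) j x * pd (pd (fun z => u z i) m) m x := by
      intro i j m
      exact (continuous_pd (hScij i j) j).mul
        (continuous_pd ((contDiff_pd (hui i) m).of_le (by simp)) m)
    rw [integral_box_sum _ fun i _ => by
      exact continuous_finset_sum _ fun j _ => continuous_finset_sum _ fun m _ => hcont3 i j m]
    refine Finset.sum_congr rfl fun i _ => ?_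
    rw [integral_box_sum _ fun j _ => continuous_finset_sum _ fun m _ => hcont3 i j m]
    refine Finset.sum_congr rfl fun j _ => ?_
    exact integral_box_sum _ fun m _ => hcont3 i j m
  -- Step B : two integrations by parts for each term
  have stepB : ∀ i j m : Fin d,
      ∫ x in box d, pd (fun y => S (G y) i j) j x * pd (pd (fun z => u z i) m) m x
      = ∫ x in box d, pd (fun y => S (G y) i j) m x * pd (pd (fun z => u z i) m) j x := by
    intro i j m
    set w : (Fin d → ℝ) → ℝ := pd (fun z => u z i) m with hwdef
    have hw : ContDiff ℝ (⊤ : ℕ∞) w := contDiff_pd (hui i) m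
    have hwper : IsPer w := isPer_pd ((hui i).differentiable (by simp)) (hupi i) m
    have hg1 : ContDiff ℝ 1 (pd w m) := (contDiff_pd hw m).of_le (by simp)
    have hg1per : IsPer (pd w m) := isPer_pd (hw.differentiable (by simp)) hwper m
    have hg2 : ContDiff ℝ 1 (pd w j) := (contDiff_pd hw j).of_le (by simp)
    have hg2per : IsPer (pd w j) := isPer_pd (hw.differentiable (by simp)) hwper j
    have h1 : ∫ x in box d, pd (fun y => S (G y) i j) j x * pd w m x
        = - ∫ x in box d, (fun y => S (G y) i j) x * pd (pd w m) j x :=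
      ibp (hScij i j) hg1 (hScper i j) hg1per j
    have h2 : ∫ x in box d, (fun y => S (G y) i j) x * pd (pd w m) j x
        = ∫ x in box d, (fun y => S (G y) i j) x * pd (pd w j) m x := by
      refine MeasureTheory.setIntegral_congr_fun measurableSet_box fun x _ => ?_
      rw [pd_comm hw m j x]
    have h3 : ∫ x in box d, pd (fun y => S (G y) i j) m x * pd w j x
        = - ∫ x in box d, (fun y => S (G y) i j) x * pd (pd w j) m x :=
      ibp (hScij i j) hg2 (hScper i j) hg2per m
    rw [h1, h2, h3]
  -- Step D : pointwise identification with the right-hand side, for each m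
  have stepD : ∀ m : Fin d,
      ∑ i, ∑ j, ∫ x in box d,
        pd (fun y => S (G y) i j) m x * pd (pd (fun z => u z i) m) j x
      = ∫ x in box d,
          minner (fderiv ℝ S (symG u x) (symG (um m) x)) (symG (um m) x) := by
    intro m
    have hcont : ∀ i j : Fin d, Continuous fun x =>
        pd (fun y => S (G y) i j) m x * pd (pd (fun z => u z i) m) j x := by
      intro i j
      exact (continuous_pd (hScij i j) m).mul
        (continuous_pd ((contDiff_pd (hui i) m).of_le (by simp)) j)
    have hptw : ∀ x : Fin d → ℝ,
        (∑ i, ∑ j, pd (fun y => S (G y) i j) m x * pd (pd (fun z => u z i) m) j x)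
        = minner (fderiv ℝ S (symG u x) (symG (um m) x)) (symG (um m) x) := by
      intro x
      have hM : Symm (fderiv ℝ S (G x) (symG (um m) x)) :=
        fderiv_S_symm hS hSsym (symm_symG u x) (symm_symG (um m) x)
      have key := sum_symm_half (fderiv ℝ S (G x) (symG (um m) x))
        (fun i j => pd (pd (fun z => u z i) m) j x) hM
      calc (∑ i, ∑ j, pd (fun y => S (G y) i j) m x * pd (pd (fun z => u z i) m) j x)
          = ∑ i, ∑ j, fderiv ℝ S (G x) (symG (um m) x) i j
              * pd (pd (fun z => u z i) m) j x := by
            refine Finset.sum_congr rfl fun i _ => Finset.sum_congr rfl fun j _ => ?_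
            rw [hchain i j m x]
        _ = ∑ i, ∑ j, fderiv ℝ S (G x) (symG (um m) x) i j
              * ((pd (pd (fun z => u z i) m) j x + pd (pd (fun z => u z j) m) i x)/2) :=
            key.symm
        _ = minner (fderiv ℝ S (symG u x) (symG (um m) x)) (symG (um m) x) := rfl
    calc ∑ i, ∑ j, ∫ x in box d,
          pd (fun y => S (G y) i j) m x * pd (pd (fun z => u z i) m) j x
        = ∑ i : Fin d, ∫ x in box d, ∑ j, pd (fun y => S (G y) i j) m x
            * pd (pd (fun z => u z i) m) j x :=
          Finset.sum_congr rfl fun i _ =>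
            (integral_box_sum _ fun j _ => hcont i j).symm
      _ = ∫ x in box d, ∑ i, ∑ j, pd (fun y => S (G y) i j) m x
            * pd (pd (fun z => u z i) m) j x :=
          (integral_box_sum _ fun i _ =>
            continuous_finset_sum _ fun j _ => hcont i j).symm
      _ = ∫ x in box d,
            minner (fderiv ℝ S (symG u x) (symG (um m) x)) (symG (um m) x) :=
          MeasureTheory.setIntegral_congr_fun measurableSet_box fun x _ => hptw x
  -- final assembly
  rw [stepA]
  have hBterm : ∑ i, ∑ j, ∑ m, ∫ x in box d,
        pd (fun y => S (G y) i j) j x * pd (pd (fun z => u z i) m) m x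
      = ∑ i, ∑ j, ∑ m, ∫ x in box d,
        pd (fun y => S (G y) i j) m x * pd (pd (fun z => u z i) m) j x :=
    Finset.sum_congr rfl fun i _ => Finset.sum_congr rfl fun j _ =>
      Finset.sum_congr rfl fun m _ => stepB i j m
  rw [hBterm]
  have hreorder : ∀ (f : Fin d → Fin d → Fin d → ℝ),
      ∑ i : Fin d, ∑ j : Fin d, ∑ m : Fin d, f i j m
        = ∑ m : Fin d, ∑ i : Fin d, ∑ j : Fin d, f i j m := by
    intro f
    calc ∑ i : Fin d, ∑ j : Fin d, ∑ m : Fin d, f i j m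
        = ∑ i : Fin d, ∑ m : Fin d, ∑ j : Fin d, f i j m :=
          Finset.sum_congr rfl fun i _ => Finset.sum_comm
      _ = ∑ m : Fin d, ∑ i : Fin d, ∑ j : Fin d, f i j m := Finset.sum_comm
  rw [hreorder fun i j m => ∫ x in box d,
        pd (fun y => S (G y) i j) m x * pd (pd (fun z => u z i) m) j x]
  exact Finset.sum_congr rfl fun m _ => stepD m
end
end

section
/- Let d ≥ 2 and let u : ℝ^d → ℝ^d be a smooth 2π-periodic vector field with div u = 0 on ℝ^d. Then ∑_{i,j,k=1}^d ∫_Ω ∂_k ( ∂_k u_j ∂_i u_j )(x) Δu_i(x) dx = ∫_Ω ∑_{i,j=1}^d (Du)_{ij}(x) Δu_i(x) Δu_j(x) dx, and consequently ∑_{i,j,k=1}^d ∫_Ω ∂_k ( ∂_k u_j ∂_i u_j )(x) Δu_i(x) dx ≤ ∫_Ω |Du(x)| |Δu(x)|² dx. -/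
open MeasureTheory Real

noncomputable section

section Aux
variable {d : ℕ}

lemma contDiff_pd {f : (Fin d → ℝ) → ℝ} (hf : ContDiff ℝ (⊤ : ℕ∞) f) (i : Fin d) :
    ContDiff ℝ (⊤ : ℕ∞) (pd f i) :=
  (hf.fderiv_right (m := (⊤ : ℕ∞)) (by simp)).clm_apply contDiff_const

lemma isPer_pd {f : (Fin d → ℝ) → ℝ} (hf : ContDiff ℝ (⊤ : ℕ∞) f) (hp : IsPer f) (i : Fin d) :
    IsPer (pd f i) := by
  intro x j
  have h1 : HasFDerivAt f (fderiv ℝ f (x + Pi.single j (2*π))) (x + Pi.single j (2*π)) :=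
    (hf.differentiable (by simp) _).hasFDerivAt
  have h2 : HasFDerivAt (fun y => f (y + Pi.single j (2*π)))
      (fderiv ℝ f (x + Pi.single j (2*π))) x := by
    have := h1.comp x ((hasFDerivAt_id x).add_const (Pi.single j (2*π)))
    exact this
  have h3 : (fun y => f (y + Pi.single j (2*π))) = f := funext fun y => hp y j
  rw [h3] at h2
  simp only [pd, h2.fderiv]

lemma pd_mul {F G : (Fin d → ℝ) → ℝ} (hF : ContDiff ℝ (⊤ : ℕ∞) F) (hG : ContDiff ℝ (⊤ : ℕ∞) G)
    (i : Fin d) (x : Fin d → ℝ) :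
    pd (fun y => F y * G y) i x = pd F i x * G x + F x * pd G i x := by
  have := fderiv_fun_mul (𝕜 := ℝ) (hF.differentiable (by simp) x) (hG.differentiable (by simp) x)
  simp only [pd, this]
  simp [mul_comm]
  ring

lemma pd_sum {ι : Type*} (s : Finset ι) (F : ι → (Fin d → ℝ) → ℝ)
    (hF : ∀ n, ContDiff ℝ (⊤ : ℕ∞) (F n)) (i : Fin d) (x : Fin d → ℝ) :
    pd (fun y => ∑ n ∈ s, F n y) i x = ∑ n ∈ s, pd (F n) i x := by
  have := fderiv_fun_sum (𝕜 := ℝ) (u := s) (A := F) (fun n _ => (hF n).differentiable (by simp) x)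
  simp [pd, this]

lemma pd_comm {f : (Fin d → ℝ) → ℝ} (hf : ContDiff ℝ (⊤ : ℕ∞) f) (i j : Fin d) (x : Fin d → ℝ) :
    pd (pd f i) j x = pd (pd f j) i x := by
  have hsymm : IsSymmSndFDerivAt ℝ f x := (hf.contDiffAt).isSymmSndFDerivAt
    (by rw [minSmoothness_of_isRCLikeNormedField]; exact WithTop.coe_le_coe.mpr (le_top (a := (2:ℕ∞))))
  have key : ∀ k l : Fin d, pd (pd f k) l x
      = fderiv ℝ (fderiv ℝ f) x (Pi.single l 1) (Pi.single k 1) := by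
    intro k l
    have hd : DifferentiableAt ℝ (fderiv ℝ f) x :=
      ((hf.fderiv_right (m := (⊤ : ℕ∞)) (by simp)).differentiable (by simp)) x
    have e1 : pd f k = fun y => fderiv ℝ f y (Pi.single k 1) := rfl
    simp only [pd, e1]
    rw [fderiv_clm_apply hd (differentiableAt_const _)]
    simp
  rw [key i j, key j i, hsymm.eq]

lemma integrableOn_box {h : (Fin d → ℝ) → ℝ} (hc : Continuous h) :
    IntegrableOn h (box d) := by
  have hsub : box d ⊆ Set.Icc (0 : Fin d → ℝ) (fun _ => 2*π) := by
    rw [← Set.pi_univ_Icc]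
    exact Set.pi_mono fun i _ => Set.Ioo_subset_Icc_self
  exact hc.integrableOn_Icc.mono_set hsub

lemma integral_pd_zero {n : ℕ} {g : (Fin (n+1) → ℝ) → ℝ} (hg : ContDiff ℝ (⊤ : ℕ∞) g)
    (hp : IsPer g) (i : Fin (n+1)) : ∫ x in box (n+1), pd g i x = 0 := by
  set a : Fin (n+1) → ℝ := 0 with ha
  set b : Fin (n+1) → ℝ := fun _ => 2*π with hb
  have hle : a ≤ b := fun j => by positivity
  set L : ℝ →L[ℝ] (Fin (n+1) → ℝ) :=
    ContinuousLinearMap.pi (Pi.single i (ContinuousLinearMap.id ℝ ℝ)) with hL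
  set f : (Fin (n+1) → ℝ) → (Fin (n+1) → ℝ) := fun x => Pi.single i (g x) with hf
  set f' : (Fin (n+1) → ℝ) → (Fin (n+1) → ℝ) →L[ℝ] (Fin (n+1) → ℝ) :=
    fun x => L.comp (fderiv ℝ g x) with hf'
  have hderiv : ∀ x, HasFDerivAt f (f' x) x := fun x =>
    (hasFDerivAt_single (𝕜 := ℝ) (E := fun _ : Fin (n+1) => ℝ) (i := i) (g x)).comp x (hg.differentiable (by simp) x).hasFDerivAt
  have hdivg : ∀ x, (∑ j, f' x (Pi.single j 1) j) = pd g i x := by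
    intro x
    have : ∀ j, f' x (Pi.single j 1) j
        = Pi.single (M := fun _ : Fin (n+1) => ℝ →L[ℝ] ℝ) i (ContinuousLinearMap.id ℝ ℝ) j
            (fderiv ℝ g x (Pi.single j 1)) := fun j => rfl
    simp only [this]
    rw [Fintype.sum_eq_single i]
    · simp [pd]
    · intro j hj
      simp [Pi.single_apply, hj]
  have hcont : Continuous (pd g i) := (contDiff_pd hg i).continuous
  have Hi : IntegrableOn (fun x => ∑ j, f' x (Pi.single j 1) j) (Set.Icc a b) := by
    simp only [hdivg]
    exact hcont.integrableOn_Icc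
  have hfc : Continuous f := continuous_pi fun j => by
    rcases eq_or_ne j i with rfl | hj
    · simpa only [hf, Pi.single_eq_same] using hg.continuous
    · simp only [hf, Pi.single_apply, if_neg hj]
      exact continuous_const
  have key := integral_divergence_of_hasFDerivAt_off_countable a b hle f f' ∅
    Set.countable_empty (hfc.continuousOn)
    (fun x _ => hderiv x) Hi
  have hbox : (∫ x in box (n+1), pd g i x) = ∫ x in Set.Icc a b, pd g i x := by
    rw [volume_pi]
    refine setIntegral_congr_set ?_
    have : box (n+1) = Set.univ.pi fun j => Set.Ioo (a j) (b j) := rfl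
    rw [this]
    exact Measure.univ_pi_Ioo_ae_eq_Icc
  rw [hbox]
  have hlhs : (∫ x in Set.Icc a b, pd g i x)
      = ∫ x in Set.Icc a b, ∑ j, f' x (Pi.single j 1) j := by
    congr 1; ext x; rw [hdivg]
  rw [hlhs, key]
  refine Finset.sum_eq_zero fun j _ => ?_
  rcases eq_or_ne j i with rfl | hne
  · have hins : ∀ x : Fin n → ℝ, Fin.insertNth (α := fun _ : Fin (n+1) => ℝ) j (b j) x
        = Fin.insertNth (α := fun _ : Fin (n+1) => ℝ) j (a j) x + Pi.single j (2*π) := by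
      intro x; funext m
      rcases eq_or_ne m j with rfl | hm
      · simp [ha, hb]
      · obtain ⟨k, rfl⟩ := Fin.exists_succAbove_eq hm
        simp [Pi.single_apply, Fin.succAbove_ne j k]
    have : ∀ x : Fin n → ℝ, f (Fin.insertNth j (b j) x) j = f (Fin.insertNth j (a j) x) j := by
      intro x
      simp only [hf, Pi.single_eq_same, hins x, hp _ j]
    rw [sub_eq_zero]
    exact setIntegral_congr_fun measurableSet_Icc fun x _ => (this x).symm ▸ rfl
  · have h0 : ∀ y, f y j = 0 := fun y => by simp [hf, Pi.single_apply, hne]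
    simp [h0]

lemma ibp {n : ℕ} {F G : (Fin (n+1) → ℝ) → ℝ} (hF : ContDiff ℝ (⊤ : ℕ∞) F) (hG : ContDiff ℝ (⊤ : ℕ∞) G)
    (hpF : IsPer F) (hpG : IsPer G) (i : Fin (n+1)) :
    (∫ x in box (n+1), pd F i x * G x) = - ∫ x in box (n+1), F x * pd G i x := by
  have hper : IsPer (fun y => F y * G y) := fun x j => by simp [hpF x j, hpG x j]
  have h0 := integral_pd_zero (hF.mul hG) hper i
  have hsplit : (∫ x in box (n+1), pd (fun y => F y * G y) i x)
      = (∫ x in box (n+1), pd F i x * G x) + ∫ x in box (n+1), F x * pd G i x := by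
    rw [← integral_add (integrableOn_box (((contDiff_pd hF i).continuous).fun_mul hG.continuous))
      (integrableOn_box (hF.continuous.fun_mul (contDiff_pd hG i).continuous))]
    exact integral_congr_ae (Filter.Eventually.of_forall fun x => pd_mul hF hG i x)
  rw [hsplit] at h0
  linarith

theorem main_aux (n : ℕ) (u : (Fin (n+1) → ℝ) → (Fin (n+1) → ℝ))
    (hu : ContDiff ℝ (⊤ : ℕ∞) u) (hup : IsPer u) (hdiv : DivFree u) :
    (∑ i, ∑ j, ∑ k, ∫ x in box (n+1),
        pd (fun y => pd (fun z => u z j) k y * pd (fun z => u z j) i y) k x * lap u i x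
      = ∫ x in box (n+1), ∑ i, ∑ j, symG u x i j * lap u i x * lap u j x) ∧
    (∑ i, ∑ j, ∑ k, ∫ x in box (n+1),
        pd (fun y => pd (fun z => u z j) k y * pd (fun z => u z j) i y) k x * lap u i x
      ≤ ∫ x in box (n+1), frob (symG u x) * ∑ i, lap u i x ^ 2) := by
  have hsmc : ∀ j, ContDiff ℝ (⊤ : ℕ∞) (fun z => u z j) := fun j => (contDiff_pi.mp hu) j
  have hperc : ∀ j, IsPer (fun z => u z j) := fun j x m => congrFun (hup x m) j
  have hsA : ∀ j k, ContDiff ℝ (⊤ : ℕ∞) (pd (fun z => u z j) k) := fun j k => contDiff_pd (hsmc j) k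
  have hpA : ∀ j k, IsPer (pd (fun z => u z j) k) := fun j k => isPer_pd (hsmc j) (hperc j) k
  have hsAA : ∀ j k i, ContDiff ℝ (⊤ : ℕ∞) (pd (pd (fun z => u z j) k) i) :=
    fun j k i => contDiff_pd (hsA j k) i
  have hpAA : ∀ j k i, IsPer (pd (pd (fun z => u z j) k) i) :=
    fun j k i => isPer_pd (hsA j k) (hpA j k) i
  have hlapdef : ∀ i, lap u i = fun x => ∑ k, pd (pd (fun z => u z i) k) k x := fun i => rfl
  have hsL : ∀ i, ContDiff ℝ (⊤ : ℕ∞) (lap u i) := by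
    intro i; rw [hlapdef i]; exact ContDiff.sum fun k _ => hsAA i k k
  have hpL : ∀ i, IsPer (lap u i) := by
    intro i x m
    simp only [lap]
    exact Finset.sum_congr rfl fun k _ => hpAA i k k x m
  have hcL : ∀ i, Continuous (lap u i) := fun i => (hsL i).continuous
  -- divergence-free consequence : ∑ i ∂ᵢ Δuᵢ = 0
  have hC : ∀ x, (∑ i, pd (lap u i) i x) = 0 := by
    intro x
    have h1 : ∀ i : Fin (n+1), pd (lap u i) i x
        = ∑ k, pd (pd (pd (fun z => u z i) k) k) i x := by
      intro i
      rw [hlapdef i, pd_sum _ _ (fun k => hsAA i k k)]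
    have h2 : ∀ i k : Fin (n+1), pd (pd (pd (fun z => u z i) k) k) i x
        = pd (pd (pd (fun z => u z i) i) k) k x := by
      intro i k
      rw [pd_comm (hsA i k) k i x]
      congr 1
      funext y
      exact pd_comm (hsmc i) k i y
    simp only [h1, h2]
    rw [Finset.sum_comm]
    refine Finset.sum_eq_zero fun k _ => ?_
    have e1 : (∑ i, pd (pd (pd (fun z => u z i) i) k) k x)
        = pd (fun z => ∑ i, pd (pd (fun z' => u z' i) i) k z) k x :=
      (pd_sum Finset.univ (fun i => pd (pd (fun z => u z i) i) k)
        (fun i => contDiff_pd (contDiff_pd (hsmc i) i) k) k x).symm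
    rw [e1]
    have e2 : (fun z => ∑ i, pd (pd (fun z' => u z' i) i) k z)
        = pd (fun z => ∑ i, pd (fun z' => u z' i) i z) k := by
      funext z
      exact (pd_sum Finset.univ (fun i => pd (fun z' => u z' i) i)
        (fun i => contDiff_pd (hsmc i) i) k z).symm
    rw [e2]
    have e3 : (fun z => ∑ i, pd (fun z' => u z' i) i z) = fun _ => (0:ℝ) :=
      funext fun z => hdiv z
    rw [e3]
    have e4 : pd (fun _ : Fin (n+1) → ℝ => (0:ℝ)) k = fun _ => 0 := by
      funext y; simp [pd]
    rw [e4]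
    simp [pd]
  -- split each integral using the product rule and Schwarz
  have split : ∀ i j k : Fin (n+1),
      (∫ x in box (n+1),
        pd (fun y => pd (fun z => u z j) k y * pd (fun z => u z j) i y) k x * lap u i x)
      = (∫ x in box (n+1), pd (pd (fun z => u z j) k) k x * pd (fun z => u z j) i x * lap u i x)
      + (∫ x in box (n+1),
          pd (fun z => u z j) k x * pd (pd (fun z => u z j) k) i x * lap u i x) := by
    intro i j k
    rw [← integral_add
      (integrableOn_box (((hsAA j k k).continuous.fun_mul (hsA j i).continuous).fun_mul (hcL i)))
      (integrableOn_box (((hsA j k).continuous.fun_mul (hsAA j k i).continuous).fun_mul (hcL i)))]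
    refine integral_congr_ae (Filter.Eventually.of_forall fun x => ?_)
    beta_reduce
    rw [pd_mul (hsA j k) (hsA j i) k x]
    have hcomm : pd (pd (fun z => u z j) i) k x = pd (pd (fun z => u z j) k) i x :=
      pd_comm (hsmc j) i k x
    rw [hcomm]
    ring
  -- the "Q" part vanishes
  have qzero : ∀ j k : Fin (n+1),
      (∑ i, ∫ x in box (n+1),
        pd (fun z => u z j) k x * pd (pd (fun z => u z j) k) i x * lap u i x) = 0 := by
    intro j k
    have h1 : ∀ i : Fin (n+1),
        (∫ x in box (n+1),
          pd (fun z => u z j) k x * pd (pd (fun z => u z j) k) i x * lap u i x)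
        = -(1/2) * ∫ x in box (n+1),
            (pd (fun z => u z j) k x * pd (fun z => u z j) k x) * pd (lap u i) i x := by
      intro i
      have e1 : (∫ x in box (n+1),
            pd (fun z => u z j) k x * pd (pd (fun z => u z j) k) i x * lap u i x)
          = (1/2) * ∫ x in box (n+1),
              pd (fun y => pd (fun z => u z j) k y * pd (fun z => u z j) k y) i x
                * lap u i x := by
        rw [← integral_const_mul]
        refine integral_congr_ae (Filter.Eventually.of_forall fun x => ?_)
        beta_reduce
        rw [pd_mul (hsA j k) (hsA j k) i x]
        ring
      have hperF : IsPer (fun y => pd (fun z => u z j) k y * pd (fun z => u z j) k y) :=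
        fun x m => by simp only [hpA j k x m]
      have e2 := ibp ((hsA j k).mul (hsA j k)) (hsL i) hperF (hpL i) i
      rw [e1, e2]
      ring
    rw [Finset.sum_congr rfl fun i _ => h1 i, ← Finset.mul_sum,
      ← integral_finset_sum _ (fun i _ => integrableOn_box
        (((hsA j k).continuous.fun_mul (hsA j k).continuous).fun_mul
          (contDiff_pd (hsL i) i).continuous))]
    have : (∫ x in box (n+1), ∑ i,
        (pd (fun z => u z j) k x * pd (fun z => u z j) k x) * pd (lap u i) i x) = 0 := by
      rw [show (fun x => ∑ i,
          (pd (fun z => u z j) k x * pd (fun z => u z j) k x) * pd (lap u i) i x)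
          = fun _ => (0:ℝ) from funext fun x => by rw [← Finset.mul_sum, hC x, mul_zero]]
      simp
    rw [this, mul_zero]
  -- the "P" part sums to the symmetric expression
  have psum : ∀ i j : Fin (n+1),
      (∑ k, ∫ x in box (n+1),
        pd (pd (fun z => u z j) k) k x * pd (fun z => u z j) i x * lap u i x)
      = ∫ x in box (n+1), lap u j x * (pd (fun z => u z j) i x * lap u i x) := by
    intro i j
    rw [← integral_finset_sum _ (fun k _ => integrableOn_box
      (((hsAA j k k).continuous.fun_mul (hsA j i).continuous).fun_mul (hcL i)))]
    refine integral_congr_ae (Filter.Eventually.of_forall fun x => ?_)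
    beta_reduce
    simp only [mul_assoc]
    rw [← Finset.sum_mul]
    rfl
  -- main equality
  have heq : (∑ i, ∑ j, ∑ k, ∫ x in box (n+1),
        pd (fun y => pd (fun z => u z j) k y * pd (fun z => u z j) i y) k x * lap u i x)
      = ∫ x in box (n+1), ∑ i, ∑ j, symG u x i j * lap u i x * lap u j x := by
    have step1 : (∑ i, ∑ j, ∑ k, ∫ x in box (n+1),
          pd (fun y => pd (fun z => u z j) k y * pd (fun z => u z j) i y) k x * lap u i x)
        = (∑ i : Fin (n+1), ∑ j : Fin (n+1), ∑ k : Fin (n+1), ∫ x in box (n+1),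
            pd (pd (fun z => u z j) k) k x * pd (fun z => u z j) i x * lap u i x)
        + (∑ i : Fin (n+1), ∑ j : Fin (n+1), ∑ k : Fin (n+1), ∫ x in box (n+1),
            pd (fun z => u z j) k x * pd (pd (fun z => u z j) k) i x * lap u i x) := by
      rw [← Finset.sum_add_distrib]
      refine Finset.sum_congr rfl fun i _ => ?_
      rw [← Finset.sum_add_distrib]
      refine Finset.sum_congr rfl fun j _ => ?_
      rw [← Finset.sum_add_distrib]
      exact Finset.sum_congr rfl fun k _ => split i j k
    have qvanish : (∑ i : Fin (n+1), ∑ j : Fin (n+1), ∑ k : Fin (n+1), ∫ x in box (n+1),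
          pd (fun z => u z j) k x * pd (pd (fun z => u z j) k) i x * lap u i x) = 0 := by
      rw [Finset.sum_comm]
      refine Finset.sum_eq_zero fun j _ => ?_
      rw [Finset.sum_comm]
      exact Finset.sum_eq_zero fun k _ => qzero j k
    have pmain : (∑ i : Fin (n+1), ∑ j : Fin (n+1), ∑ k : Fin (n+1), ∫ x in box (n+1),
          pd (pd (fun z => u z j) k) k x * pd (fun z => u z j) i x * lap u i x)
        = ∫ x in box (n+1), ∑ i, ∑ j, symG u x i j * lap u i x * lap u j x := by
      have inner : ∀ i : Fin (n+1), (∑ j : Fin (n+1), ∑ k : Fin (n+1), ∫ x in box (n+1),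
            pd (pd (fun z => u z j) k) k x * pd (fun z => u z j) i x * lap u i x)
          = ∫ x in box (n+1), ∑ j, lap u j x * (pd (fun z => u z j) i x * lap u i x) := by
        intro i
        rw [Finset.sum_congr rfl fun j _ => psum i j,
          ← integral_finset_sum _ (fun j _ => integrableOn_box
            ((hcL j).fun_mul ((hsA j i).continuous.fun_mul (hcL i))))]
      rw [Finset.sum_congr rfl fun i _ => inner i,
        ← integral_finset_sum _ (fun i _ => integrableOn_box
          (continuous_finset_sum _ fun j _ => (hcL j).fun_mul ((hsA j i).continuous.fun_mul (hcL i))))]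
      refine integral_congr_ae (Filter.Eventually.of_forall fun x => ?_)
      beta_reduce
      -- pointwise symmetrization
      have hsymm : ∀ i j : Fin (n+1), symG u x i j * lap u i x * lap u j x
          = (pd (fun z => u z i) j x * lap u i x * lap u j x
            + pd (fun z => u z j) i x * lap u i x * lap u j x) / 2 := by
        intro i j
        simp only [symG, gradM]
        ring
      have h12 : (∑ i : Fin (n+1), ∑ j : Fin (n+1),
            pd (fun z => u z i) j x * lap u i x * lap u j x)
          = ∑ i : Fin (n+1), ∑ j : Fin (n+1),
            pd (fun z => u z j) i x * lap u i x * lap u j x := by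
        rw [Finset.sum_comm]
        exact Finset.sum_congr rfl fun i _ => Finset.sum_congr rfl fun j _ => by ring
      calc (∑ i : Fin (n+1), ∑ j : Fin (n+1),
            lap u j x * (pd (fun z => u z j) i x * lap u i x))
          = ∑ i : Fin (n+1), ∑ j : Fin (n+1),
            pd (fun z => u z j) i x * lap u i x * lap u j x :=
            Finset.sum_congr rfl fun i _ => Finset.sum_congr rfl fun j _ => by ring
        _ = ∑ i, ∑ j, symG u x i j * lap u i x * lap u j x := by
            simp only [hsymm, ← Finset.sum_div, Finset.sum_add_distrib]
            rw [← h12]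
            ring
    rw [step1, qvanish, add_zero, pmain]
  -- continuity facts for the inequality
  have hcontS : ∀ i j : Fin (n+1), Continuous (fun x => symG u x i j) := by
    intro i j
    have e : (fun x => symG u x i j)
        = fun x => (pd (fun z => u z i) j x + pd (fun z => u z j) i x) / 2 := rfl
    rw [e]
    exact ((hsA i j).continuous.add (hsA j i).continuous).div_const 2
  have hintL : IntegrableOn (fun x => ∑ i, ∑ j, symG u x i j * lap u i x * lap u j x)
      (box (n+1)) :=
    integrableOn_box (continuous_finset_sum _ fun i _ => continuous_finset_sum _ fun j _ =>
      ((hcontS i j).mul (hcL i)).mul (hcL j))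
  have hintR : IntegrableOn (fun x => frob (symG u x) * ∑ i, lap u i x ^ 2) (box (n+1)) := by
    refine integrableOn_box (Continuous.mul ?_ ?_)
    · have e : (fun x => frob (symG u x))
          = fun x => Real.sqrt (∑ i, ∑ j, (symG u x i j)^2) := rfl
      rw [e]
      exact Real.continuous_sqrt.comp (continuous_finset_sum _ fun i _ =>
        continuous_finset_sum _ fun j _ => (hcontS i j).pow 2)
    · exact continuous_finset_sum _ fun i _ => (hcL i).pow 2
  have hpt : ∀ x, (∑ i, ∑ j, symG u x i j * lap u i x * lap u j x)
      ≤ frob (symG u x) * ∑ i, lap u i x ^ 2 := by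
    intro x
    have cs := Real.sum_mul_le_sqrt_mul_sqrt (Finset.univ ×ˢ Finset.univ)
      (fun p : Fin (n+1) × Fin (n+1) => symG u x p.1 p.2)
      (fun p : Fin (n+1) × Fin (n+1) => lap u p.1 x * lap u p.2 x)
    have e1 : (∑ p ∈ Finset.univ ×ˢ Finset.univ,
          symG u x p.1 p.2 * (lap u p.1 x * lap u p.2 x))
        = ∑ i, ∑ j, symG u x i j * lap u i x * lap u j x := by
      rw [Finset.sum_product]
      exact Finset.sum_congr rfl fun i _ => Finset.sum_congr rfl fun j _ => by ring
    have e2 : (∑ p ∈ Finset.univ ×ˢ Finset.univ, symG u x p.1 p.2 ^ 2)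
        = ∑ i, ∑ j, symG u x i j ^ 2 := by
      rw [Finset.sum_product]
    have e3 : (∑ p ∈ Finset.univ ×ˢ Finset.univ, (lap u p.1 x * lap u p.2 x) ^ 2)
        = (∑ i, lap u i x ^ 2) * (∑ j, lap u j x ^ 2) := by
      rw [Finset.sum_mul_sum, Finset.sum_product]
      exact Finset.sum_congr rfl fun i _ => Finset.sum_congr rfl fun j _ => mul_pow _ _ _
    rw [e1, e2, e3] at cs
    have e4 : Real.sqrt ((∑ i, lap u i x ^ 2) * (∑ i, lap u i x ^ 2))
        = ∑ i, lap u i x ^ 2 :=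
      Real.sqrt_mul_self (Finset.sum_nonneg fun i _ => sq_nonneg _)
    rw [e4] at cs
    exact cs
  refine ⟨heq, ?_⟩
  rw [heq]
  exact integral_mono hintL hintR hpt

end Aux

/-- identity and estimate for `∑ ∫ ∂ₖ(∂ₖuⱼ ∂ᵢuⱼ) Δuᵢ`. -/
theorem stmt_12 (d : ℕ) (hd : 2 ≤ d)
    (u : (Fin d → ℝ) → (Fin d → ℝ))
    (hu : ContDiff ℝ (⊤ : ℕ∞) u) (hup : IsPer u) (hdiv : DivFree u) :
    (∑ i, ∑ j, ∑ k, ∫ x in box d,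
        pd (fun y => pd (fun z => u z j) k y * pd (fun z => u z j) i y) k x * lap u i x
      = ∫ x in box d, ∑ i, ∑ j, symG u x i j * lap u i x * lap u j x) ∧
    (∑ i, ∑ j, ∑ k, ∫ x in box d,
        pd (fun y => pd (fun z => u z j) k y * pd (fun z => u z j) i y) k x * lap u i x
      ≤ ∫ x in box d, frob (symG u x) * ∑ i, lap u i x ^ 2) := by
  obtain ⟨n, rfl⟩ : ∃ n, d = n + 1 := ⟨d - 1, by omega⟩
  exact main_aux n u hu hup hdiv
end
end
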